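/- arXiv:2211.06469 — 12 statements merged into one kernel-verified Lean document; each statement's English description precedes it below -/
import Mathlib

section
/- Let θ(x) = ∑_{p prime, p ≤ x} log p, p_n the n-th prime, and g_n = p_{n+1} − p_n. Let x₀ ≥ 2 and let f : ℝ → ℝ be continuous and nonincreasing on [x₀, ∞), and suppose |θ(x) − x| < x · f(x) for all x ≥ x₀. Then for every n with p_n ≥ x₀ and f(p_n) < 1 one has g_n / p_n < 2 f(p_n) / (1 − f(p_n)). -/
/-- The first Chebyshev function `θ(x) = ∑_{p prime, p ≤ x} log p`. -/
noncomputable def chebyshevθ (x : ℝ) : ℝ :=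
  ∑ p ∈ Finset.filter Nat.Prime (Finset.range (⌊x⌋₊ + 1)), Real.log p

/-- The `n`-th prime number, indexed so that `nthPrime 1 = 2`. -/
noncomputable def nthPrime (n : ℕ) : ℕ := Nat.nth Nat.Prime (n - 1)

/-- The `n`-th prime gap `gₙ = p_{n+1} - pₙ` (as a real number). -/
noncomputable def primeGap (n : ℕ) : ℝ := (nthPrime (n + 1) : ℝ) - (nthPrime n : ℝ)

lemma chebyshevθ_const (p q : ℕ) (hno : ∀ r : ℕ, r.Prime → p < r → q ≤ r) (x : ℝ)
    (hpx : (p : ℝ) ≤ x) (hxq : x < q) : chebyshevθ x = chebyshevθ (p : ℝ) := by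
  unfold chebyshevθ
  congr 1
  have h1 : p ≤ ⌊x⌋₊ := Nat.le_floor hpx
  have h2 : ⌊x⌋₊ < q := by
    rcases le_or_gt 0 x with hx0 | hx0
    · exact (Nat.floor_lt hx0).2 hxq
    · exact absurd (lt_of_le_of_lt hpx hx0) (not_lt.2 (Nat.cast_nonneg p))
  rw [Nat.floor_natCast]
  ext r
  simp only [Finset.mem_filter, Finset.mem_range, Nat.lt_succ_iff]
  constructor
  · rintro ⟨hr, hpr⟩
    refine ⟨?_, hpr⟩
    by_contra h
    push_neg at h
    exact absurd (hno r hpr h) (by omega)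
  · rintro ⟨hr, hpr⟩
    exact ⟨by omega, hpr⟩

theorem primeGap_ratio_lt (x₀ : ℝ) (hx₀ : 2 ≤ x₀) (f : ℝ → ℝ)
    (hf : ContinuousOn f (Set.Ici x₀)) (hmono : AntitoneOn f (Set.Ici x₀))
    (hθ : ∀ x : ℝ, x₀ ≤ x → |chebyshevθ x - x| < x * f x) :
    ∀ n : ℕ, 1 ≤ n → x₀ ≤ (nthPrime n : ℝ) → f (nthPrime n) < 1 →
      primeGap n / (nthPrime n : ℝ) <
        2 * f (nthPrime n) / (1 - f (nthPrime n)) := by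
  intro n hn hpx₀ hf1
  set k := n - 1 with hk
  have hn1 : n + 1 - 1 = k + 1 := by omega
  set p := nthPrime n with hp
  set q := nthPrime (n + 1) with hq
  have hpq : p < q := by
    rw [hp, hq, nthPrime, nthPrime, hn1, ← hk]
    exact (Nat.nth_lt_nth Nat.infinite_setOf_prime).2 (Nat.lt_succ_self k)
  have hno : ∀ r : ℕ, r.Prime → p < r → q ≤ r := by
    intro r hr hpr
    by_contra h
    push_neg at h
    have h1 : Nat.nth Nat.Prime (Nat.count Nat.Prime r) = r := Nat.nth_count hr
    have h2 : k < Nat.count Nat.Prime r := by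
      have := (Nat.nth_lt_nth Nat.infinite_setOf_prime (p := Nat.Prime)
        (k := k) (n := Nat.count Nat.Prime r)).1
      apply this
      rw [h1]; exact hpr
    have h3 : Nat.count Nat.Prime r < k + 1 := by
      have := (Nat.nth_lt_nth Nat.infinite_setOf_prime (p := Nat.Prime)
        (k := Nat.count Nat.Prime r) (n := k + 1)).1
      apply this
      rw [h1]
      exact lt_of_lt_of_le h (le_of_eq (by rw [hq, nthPrime, hn1]))
    omega
  have hpqR : (p : ℝ) < (q : ℝ) := by exact_mod_cast hpq
  have hqx₀ : x₀ ≤ (q : ℝ) := hpx₀.trans hpqR.le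
  have hpmem : (p : ℝ) ∈ Set.Ici x₀ := hpx₀
  have hqmem : (q : ℝ) ∈ Set.Ici x₀ := hqx₀
  have hppos : (0 : ℝ) < p := lt_of_lt_of_le (by linarith) hpx₀
  -- θ(p) < p (1 + f p)
  have hθp : chebyshevθ p < p * (1 + f p) := by
    have := hθ p hpx₀
    rw [abs_lt] at this
    nlinarith [this.2]
  -- pointwise bound on [p, q)
  have hptwise : ∀ x ∈ Set.Ico (p : ℝ) (q : ℝ), x * (1 - f x) ≤ chebyshevθ p := by
    intro x hx
    have hxx₀ : x₀ ≤ x := hpx₀.trans hx.1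
    have hθx := hθ x hxx₀
    rw [abs_lt] at hθx
    have heq : chebyshevθ x = chebyshevθ (p : ℝ) := chebyshevθ_const p q hno x hx.1 hx.2
    nlinarith [hθx.1]
  -- limit: q (1 - f q) ≤ θ(p)
  have hlim : (q : ℝ) * (1 - f q) ≤ chebyshevθ p := by
    have hcont : ContinuousWithinAt (fun x : ℝ => x * (1 - f x)) (Set.Ico (p : ℝ) q) (q : ℝ) := by
      apply ContinuousWithinAt.mono (t := Set.Ici x₀)
      · exact continuousWithinAt_id.mul (continuousWithinAt_const.sub (hf.continuousWithinAt hqmem))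
      · intro x hx; exact hpx₀.trans hx.1
    have hne : (nhdsWithin (q : ℝ) (Set.Ico (p : ℝ) q)).NeBot := right_nhdsWithin_Ico_neBot hpqR
    refine le_of_tendsto hcont ?_
    filter_upwards [self_mem_nhdsWithin] with x hx using hptwise x hx
  have hfq : f q ≤ f p := hmono hpmem hqmem hpqR.le
  have hkey : (q : ℝ) * (1 - f p) < p * (1 + f p) := by
    have hq0 : (0 : ℝ) ≤ q := by positivity
    nlinarith
  show ((q : ℝ) - p) / p < 2 * f p / (1 - f p)
  rw [div_lt_div_iff₀ hppos (by linarith)]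
  nlinarith
end

section
/- Let θ(x) = ∑_{p prime, p ≤ x} log p, p_n the n-th prime, and g_n = p_{n+1} − p_n. Let x₀ ≥ 2 and let f : ℝ → ℝ be continuous and nonincreasing on [x₀, ∞), and suppose |θ(x) − x| < x · f(x) for all x ≥ x₀. Then for every n with p_n ≥ x₀ one has g_n < 3 p_n · f(p_n). -/
theorem primeGap_lt_three_mul (x₀ : ℝ) (hx₀ : 2 ≤ x₀) (f : ℝ → ℝ)
    (hf : ContinuousOn f (Set.Ici x₀)) (hmono : AntitoneOn f (Set.Ici x₀))
    (hθ : ∀ x : ℝ, x₀ ≤ x → |chebyshevθ x - x| < x * f x) :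
    ∀ n : ℕ, 1 ≤ n → x₀ ≤ (nthPrime n : ℝ) →
      primeGap n < 3 * (nthPrime n : ℝ) * f (nthPrime n) := by
  intro n hn hxp
  set p : ℕ := nthPrime n with hp
  set q : ℕ := nthPrime (n + 1) with hq
  have hqn : q = Nat.nth Nat.Prime n := by simp [hq, nthPrime]
  have hpn : p = Nat.nth Nat.Prime (n - 1) := rfl
  have hinf : (setOf Nat.Prime).Infinite := Nat.infinite_setOf_prime
  have hpq : p < q := by
    rw [hpn, hqn]
    exact (Nat.nth_lt_nth hinf).2 (Nat.sub_lt hn one_pos)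
  have hpprime : p.Prime := Nat.prime_nth_prime _
  have hqprime : q.Prime := by rw [hqn]; exact Nat.prime_nth_prime _
  -- no prime strictly between p and q
  have hbetween : ∀ r : ℕ, r.Prime → p < r → q ≤ r := by
    intro r hr hpr
    have h1 : Nat.nth Nat.Prime (Nat.count Nat.Prime r) = r := Nat.nth_count hr
    have h2 : n - 1 < Nat.count Nat.Prime r := by
      by_contra hcon
      push_neg at hcon
      have := Nat.nth_le_nth hinf |>.2 hcon
      rw [h1, ← hpn] at this
      omega
    have h3 : n ≤ Nat.count Nat.Prime r := by omega
    calc q = Nat.nth Nat.Prime n := hqn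
    _ ≤ Nat.nth Nat.Prime (Nat.count Nat.Prime r) := (Nat.nth_le_nth hinf).2 h3
    _ = r := h1
  -- Bertrand: q < 2p
  have hq2p : q < 2 * p := by
    obtain ⟨r, hr, hpr, hr2⟩ := Nat.exists_prime_lt_and_le_two_mul p hpprime.pos.ne'
    have := hbetween r hr hpr
    have h2p : ¬ (2 * p).Prime :=
      Nat.not_prime_mul (by norm_num) (by have := hpprime.two_le; omega)
    rcases lt_or_eq_of_le (le_trans this hr2) with h | h
    · exact h
    · exact absurd (h ▸ hqprime) h2p
  have hP0 : (0:ℝ) < p := by exact_mod_cast hpprime.pos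
  have hx₀P : x₀ ≤ (p:ℝ) := hxp
  have hPmem : (p:ℝ) ∈ Set.Ici x₀ := hx₀P
  have hfP : 0 < f p := by
    have h := hθ p hx₀P
    nlinarith [abs_nonneg (chebyshevθ p - (p:ℝ))]
  have hPQ : (p:ℝ) < q := by exact_mod_cast hpq
  have hθP : chebyshevθ p - p < p * f p := (abs_lt.1 (hθ p hx₀P)).2
  -- θ constant on [p, q)
  have hconst : ∀ x : ℝ, (p:ℝ) ≤ x → x < q → chebyshevθ x = chebyshevθ p := by
    intro x hpx hxq
    have hx0 : (0:ℝ) ≤ x := le_trans hP0.le hpx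
    have hfl1 : p ≤ ⌊x⌋₊ := Nat.le_floor hpx
    have hfl2 : ⌊x⌋₊ < q := by
      rw [Nat.floor_lt hx0]; exact_mod_cast hxq
    have hfp : ⌊(p:ℝ)⌋₊ = p := Nat.floor_natCast p
    unfold chebyshevθ
    rw [hfp]
    congr 1
    ext r
    simp only [Finset.mem_filter, Finset.mem_range]
    constructor
    · rintro ⟨hrlt, hr⟩
      refine ⟨?_, hr⟩
      have : r ≤ p := by
        by_contra hcon
        push_neg at hcon
        have := hbetween r hr hcon
        omega
      omega
    · rintro ⟨hrlt, hr⟩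
      exact ⟨by omega, hr⟩
  rcases le_or_gt 1 (f p) with hf1 | hf1
  · -- easy case
    have : primeGap n < (p:ℝ) := by
      rw [primeGap]
      have : (q:ℝ) < 2 * p := by exact_mod_cast hq2p
      simp only [← hp, ← hq]
      linarith
    calc primeGap n < (p:ℝ) := this
    _ < 3 * p * f p := by nlinarith
  · -- main case
    have hmain : (q:ℝ) ≤ p * (1 + f p) / (1 - f p) := by
      apply le_of_forall_lt
      intro c hc
      have hx : max c (p:ℝ) < q := max_lt hc hPQ
      set x := max c (p:ℝ) with hxdef
      have hpx : (p:ℝ) ≤ x := le_max_right _ _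
      have hx₀x : x₀ ≤ x := le_trans hx₀P hpx
      have hθx := hθ x hx₀x
      rw [hconst x hpx hx] at hθx
      have h1 : x - chebyshevθ p < x * f x := (abs_lt.1 hθx).2 |>.trans_le (le_refl _) |> fun _ => by
        have := (abs_lt.1 hθx).1
        linarith
      have hfx : f x ≤ f p := hmono hPmem (le_trans hx₀P hpx) hpx
      have hx0 : (0:ℝ) ≤ x := le_trans hP0.le hpx
      have h2 : x - chebyshevθ p < x * f p := by nlinarith
      have h3 : x * (1 - f p) < p * (1 + f p) := by nlinarith
      have hxlt : x < p * (1 + f p) / (1 - f p) := by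
        rw [lt_div_iff₀ (by linarith)]
        linarith
      exact lt_of_le_of_lt (le_max_left _ _) hxlt
    have hQ2 : (q:ℝ) < 2 * p := by exact_mod_cast hq2p
    have h4 : (q:ℝ) * (1 - f p) ≤ p * (1 + f p) := by
      rw [le_div_iff₀ (by linarith : (0:ℝ) < 1 - f p)] at hmain
      exact hmain
    have : (q:ℝ) - p ≤ ((p:ℝ) + q) * f p := by nlinarith
    rw [primeGap]
    simp only [← hp, ← hq]
    nlinarith
end

section
/- Let θ(x) = ∑_{p prime, p ≤ x} log p, p_n the n-th prime, and g_n = p_{n+1} − p_n. Let a > 0, b ≥ 0, c > 0, x₀ ≥ 2, and suppose |θ(x) − x| < a x (log x)^b exp(−c √(log x)) for all x ≥ x₀. Set x⋆ = max(x₀, exp((2b/c)²)). If moreover a (log x)^b exp(−c √(log x)) < 1 for all x ≥ x⋆, then for every n with p_n ≥ x⋆ one has g_n / p_n < 2 a (log p_n)^b exp(−c √(log p_n)) / (1 − a (log p_n)^b exp(−c √(log p_n))). -/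
/-!
Write `P = p_n`, `Q = p_{n+1}` and `ε(x) = a (log x)^b exp(-c √(log x))`. Since `θ` is constant on
`[P, Q)`, the lower bound `x (1 - ε(x)) < θ(x)` for `x ∈ [P, Q)` together with the monotonicity of
`ε` beyond `exp((2b/c)²)` gives `Q (1 - ε(P)) ≤ θ(P)` in the limit `x → Q`, while the upper bound at
`P` gives `θ(P) < P (1 + ε(P))`. Hence `Q / P < (1 + ε(P)) / (1 - ε(P))`.
-/

open Real Set Chebyshev

/-- The paper's `ε(x)`, so that the hypothesis reads `|θ(x) - x| < x ε(x)`. -/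
noncomputable def pntError (a b c x : ℝ) : ℝ := a * log x ^ b * exp (-c * √(log x))

theorem chebyshevθ_eq_theta : chebyshevθ = θ := by
  funext x
  rw [theta_eq_sum_primesLE]
  rfl

theorem theta_eq_theta_nth_of_lt_nth_succ {k : ℕ} {x : ℝ} (hx : (Nat.nth Nat.Prime k : ℝ) ≤ x)
    (hx' : x < Nat.nth Nat.Prime (k + 1)) : θ x = θ (Nat.nth Nat.Prime k) := by
  have hx₀ : 0 ≤ x := (Nat.cast_nonneg _).trans hx
  rw [theta_eq_sum_primesLE, theta_eq_sum_primesLE_log]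
  congr 1
  ext p
  simp only [Nat.mem_primesLE, and_congr_left_iff]
  intro hp
  constructor
  · intro hpx
    have : (p : ℝ) < Nat.nth Nat.Prime (k + 1) := ((Nat.le_floor_iff hx₀).1 hpx).trans_lt hx'
    exact Nat.le_nth_of_lt_nth_succ (by exact_mod_cast this) hp
  · intro hpk
    exact Nat.le_floor ((Nat.cast_le.2 hpk).trans hx)

theorem rpow_mul_exp_neg_mul_le_of_le {k c s t : ℝ} (hc : 0 ≤ c) (hs : 0 < s) (hst : s ≤ t)
    (hks : k ≤ c * s) : t ^ k * exp (-c * t) ≤ s ^ k * exp (-c * s) := by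
  have ht : 0 < t := hs.trans_le hst
  rw [rpow_def_of_pos hs, rpow_def_of_pos ht, ← exp_add, ← exp_add, exp_le_exp]
  have hlog : log t - log s ≤ t / s - 1 := by
    rw [← log_div ht.ne' hs.ne']
    exact log_le_sub_one_of_pos (by positivity)
  have hlog₀ : 0 ≤ log t - log s := sub_nonneg.2 (log_le_log hs hst)
  have hratio : s * (t / s - 1) = t - s := by field_simp
  rcases le_total k 0 with hk | hk
  · nlinarith
  · nlinarith [mul_le_mul_of_nonneg_left hlog hk]

theorem pntError_antitoneOn {a b c : ℝ} (ha : 0 ≤ a) (hc : 0 < c) :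
    AntitoneOn (pntError a b c) (Ioi 1 ∩ Ici (exp ((2 * b / c) ^ 2))) := by
  rintro x ⟨hx₁, hx⟩ y ⟨hy₁, -⟩ hxy
  have hx₀ : 0 < x := zero_lt_one.trans hx₁
  have hlog_rpow : ∀ z : ℝ, 1 < z → log z ^ b = √(log z) ^ (2 * b) := fun z hz => by
    rw [rpow_mul (sqrt_nonneg _), rpow_two, sq_sqrt (log_nonneg hz.le)]
  have hks : 2 * b ≤ c * √(log x) := by
    have hsq : (2 * b / c) ^ 2 ≤ log x := (le_log_iff_exp_le hx₀).2 hx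
    have : 2 * b / c ≤ √(log x) :=
      (le_abs_self _).trans ((sqrt_sq_eq_abs _).symm.trans_le (sqrt_le_sqrt hsq))
    rw [div_le_iff₀ hc] at this
    linarith
  unfold pntError
  rw [hlog_rpow x hx₁, hlog_rpow y hy₁, mul_assoc, mul_assoc]
  exact mul_le_mul_of_nonneg_left (rpow_mul_exp_neg_mul_le_of_le hc.le
    (sqrt_pos.2 (log_pos hx₁)) (sqrt_le_sqrt (log_le_log hx₀ hxy)) hks) ha

theorem nth_prime_succ_mul_one_sub_pntError_le_theta {a b c : ℝ} {k : ℕ} (ha : 0 ≤ a)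
    (hc : 0 < c) (hk : exp ((2 * b / c) ^ 2) ≤ Nat.nth Nat.Prime k)
    (hθ : ∀ x ∈ Ico (Nat.nth Nat.Prime k : ℝ) (Nat.nth Nat.Prime (k + 1)),
      x - θ x < x * pntError a b c x) :
    (Nat.nth Nat.Prime (k + 1) : ℝ) * (1 - pntError a b c (Nat.nth Nat.Prime k)) ≤
      θ (Nat.nth Nat.Prime k) := by
  have hPQ : (Nat.nth Nat.Prime k : ℝ) < Nat.nth Nat.Prime (k + 1) := by
    exact_mod_cast Nat.nth_strictMono Nat.infinite_setOfPred_prime (Nat.lt_succ_self k)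
  have hP₁ : (1 : ℝ) < Nat.nth Nat.Prime k := by exact_mod_cast (Nat.prime_nth_prime k).one_lt
  set P : ℝ := ((Nat.nth Nat.Prime k : ℕ) : ℝ)
  set Q : ℝ := ((Nat.nth Nat.Prime (k + 1) : ℕ) : ℝ)
  have hIco : Ico P Q ⊆ {x | x * (1 - pntError a b c P) < θ P} := by
    intro x ⟨hPx, hxQ⟩
    have hlt := hθ x ⟨hPx, hxQ⟩
    rw [theta_eq_theta_nth_of_lt_nth_succ hPx hxQ] at hlt
    have hε : pntError a b c x ≤ pntError a b c P :=
      pntError_antitoneOn ha hc ⟨hP₁, hk⟩ ⟨hP₁.trans_le hPx, hk.trans hPx⟩ hPx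
    show x * (1 - pntError a b c P) < θ P
    nlinarith
  have hQ : Q ∈ closure (Ico P Q) := by
    rw [closure_Ico hPQ.ne]
    exact right_mem_Icc.2 hPQ.le
  exact closure_lt_subset_le (by fun_prop) continuous_const (closure_mono hIco hQ)

theorem lemma_part_i_general (a b c x₀ : ℝ) (ha : 0 < a) (hc : 0 < c)
    (hθ : ∀ x : ℝ, x₀ ≤ x →
      |chebyshevθ x - x| < a * x * Real.log x ^ b * Real.exp (-c * Real.sqrt (Real.log x)))
    (hsmall : ∀ x : ℝ, max x₀ (Real.exp ((2 * b / c) ^ 2)) ≤ x →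
      a * Real.log x ^ b * Real.exp (-c * Real.sqrt (Real.log x)) < 1) :
    ∀ n : ℕ, 1 ≤ n → max x₀ (Real.exp ((2 * b / c) ^ 2)) ≤ (nthPrime n : ℝ) →
      primeGap n / (nthPrime n : ℝ) <
        2 * (a * Real.log (nthPrime n) ^ b *
              Real.exp (-c * Real.sqrt (Real.log (nthPrime n)))) /
          (1 - a * Real.log (nthPrime n) ^ b *
              Real.exp (-c * Real.sqrt (Real.log (nthPrime n)))) := by
  rintro (_ | k) hn hP
  · omega
  change max x₀ _ ≤ ((Nat.nth Nat.Prime k : ℕ) : ℝ) at hP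
  change ((Nat.nth Nat.Prime (k + 1) : ℕ) - ((Nat.nth Nat.Prime k : ℕ) : ℝ)) /
      ((Nat.nth Nat.Prime k : ℕ) : ℝ) <
    2 * pntError a b c (Nat.nth Nat.Prime k) / (1 - pntError a b c (Nat.nth Nat.Prime k))
  have hθ' : ∀ x, x₀ ≤ x → |θ x - x| < x * pntError a b c x := fun x hx =>
    chebyshevθ_eq_theta ▸ (hθ x hx).trans_eq (by unfold pntError; ring)
  have hP₀ : (0 : ℝ) < Nat.nth Nat.Prime k := by exact_mod_cast (Nat.prime_nth_prime k).pos
  set P : ℝ := ((Nat.nth Nat.Prime k : ℕ) : ℝ)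
  set Q : ℝ := ((Nat.nth Nat.Prime (k + 1) : ℕ) : ℝ)
  set ε := pntError a b c P
  have hε : ε < 1 := hsmall P hP
  have hupper : θ P - P < P * ε := (le_abs_self _).trans_lt (hθ' P (le_of_max_le_left hP))
  have hlower : Q * (1 - ε) ≤ θ P :=
    nth_prime_succ_mul_one_sub_pntError_le_theta ha.le hc (le_of_max_le_right hP)
      fun x hx => ((le_abs_self _).trans_eq (abs_sub_comm _ _)).trans_lt
        (hθ' x ((le_of_max_le_left hP).trans hx.1))
  rw [div_lt_div_iff₀ hP₀ (sub_pos.2 hε)]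
  linarith

theorem lemma_part_i (a b c x₀ : ℝ) (ha : 0 < a) (hb : 0 ≤ b) (hc : 0 < c) (hx₀ : 2 ≤ x₀)
    (hθ : ∀ x : ℝ, x₀ ≤ x →
      |chebyshevθ x - x| < a * x * Real.log x ^ b * Real.exp (-c * Real.sqrt (Real.log x)))
    (hsmall : ∀ x : ℝ, max x₀ (Real.exp ((2 * b / c) ^ 2)) ≤ x →
      a * Real.log x ^ b * Real.exp (-c * Real.sqrt (Real.log x)) < 1) :
    ∀ n : ℕ, 1 ≤ n → max x₀ (Real.exp ((2 * b / c) ^ 2)) ≤ (nthPrime n : ℝ) →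
      primeGap n / (nthPrime n : ℝ) <
        2 * (a * Real.log (nthPrime n) ^ b *
              Real.exp (-c * Real.sqrt (Real.log (nthPrime n)))) /
          (1 - a * Real.log (nthPrime n) ^ b *
              Real.exp (-c * Real.sqrt (Real.log (nthPrime n)))) :=
  lemma_part_i_general a b c x₀ ha hc hθ hsmall
end

section
/- Let θ(x) = ∑_{p prime, p ≤ x} log p, p_n the n-th prime, and g_n = p_{n+1} − p_n. Let a > 0, b ≥ 0, c > 0, x₀ ≥ 2, and suppose |θ(x) − x| < a x (log x)^b exp(−c √(log x)) for all x ≥ x₀. Set x⋆ = max(x₀, exp((2b/c)²)). Then for every n with p_n ≥ x⋆ one has g_n / p_n < 3 a (log p_n)^b exp(−c √(log p_n)). -/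
set_option maxHeartbeats 1000000

private lemma aux_f_mono (b c : ℝ) (hb : 0 ≤ b) (hc : 0 < c) {t s : ℝ}
    (ht0 : 0 < t) (htc : (2 * b / c) ^ 2 ≤ t) (hts : t ≤ s) :
    s ^ b * Real.exp (-c * Real.sqrt s) ≤ t ^ b * Real.exp (-c * Real.sqrt t) := by
  have hs0 : 0 < s := lt_of_lt_of_le ht0 hts
  rw [Real.rpow_def_of_pos hs0, Real.rpow_def_of_pos ht0, ← Real.exp_add, ← Real.exp_add,
    Real.exp_le_exp]
  have hst : Real.sqrt t ≤ Real.sqrt s := Real.sqrt_le_sqrt hts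
  have hst0 : 0 < Real.sqrt t := Real.sqrt_pos.mpr ht0
  have h2bc : 2 * b / c ≤ Real.sqrt t := by
    calc 2 * b / c ≤ |2 * b / c| := le_abs_self _
    _ = Real.sqrt ((2 * b / c) ^ 2) := (Real.sqrt_sq_eq_abs _).symm
    _ ≤ Real.sqrt t := Real.sqrt_le_sqrt htc
  have h2b : 2 * b ≤ c * Real.sqrt t := by
    rw [div_le_iff₀ hc] at h2bc; linarith [mul_comm c (Real.sqrt t)]
  have hu0 : 0 ≤ Real.sqrt s / Real.sqrt t - 1 := by
    have := (one_le_div hst0).mpr hst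
    linarith
  have hlog : Real.log s - Real.log t ≤ 2 * (Real.sqrt s / Real.sqrt t - 1) := by
    have h1 : Real.log (Real.sqrt s / Real.sqrt t) ≤ Real.sqrt s / Real.sqrt t - 1 :=
      Real.log_le_sub_one_of_pos (div_pos (Real.sqrt_pos.mpr hs0) hst0)
    rw [Real.log_div (Real.sqrt_pos.mpr hs0).ne' hst0.ne',
      Real.log_sqrt hs0.le, Real.log_sqrt ht0.le] at h1
    linarith
  have key : b * (Real.log s - Real.log t) ≤ c * (Real.sqrt s - Real.sqrt t) := by
    have h2 : b * (Real.log s - Real.log t) ≤ b * (2 * (Real.sqrt s / Real.sqrt t - 1)) :=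
      mul_le_mul_of_nonneg_left hlog hb
    have h4 : (2 * b) * (Real.sqrt s / Real.sqrt t - 1)
        ≤ (c * Real.sqrt t) * (Real.sqrt s / Real.sqrt t - 1) :=
      mul_le_mul_of_nonneg_right h2b hu0
    have h5 : (c * Real.sqrt t) * (Real.sqrt s / Real.sqrt t - 1)
        = c * (Real.sqrt s - Real.sqrt t) := by
      field_simp
    nlinarith
  nlinarith [key]

private lemma no_prime_between (k : ℕ) {m : ℕ} (hm : Nat.Prime m)
    (h1 : Nat.nth Nat.Prime k < m) : Nat.nth Nat.Prime (k + 1) ≤ m := by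
  have hinf := Nat.infinite_setOf_prime
  have hcount : k + 1 ≤ Nat.count Nat.Prime m := by
    calc k + 1 = Nat.count Nat.Prime (Nat.nth Nat.Prime k + 1) :=
          (Nat.count_nth_succ_of_infinite hinf k).symm
    _ ≤ Nat.count Nat.Prime m := Nat.count_monotone _ h1
  calc Nat.nth Nat.Prime (k + 1) ≤ Nat.nth Nat.Prime (Nat.count Nat.Prime m) :=
        (Nat.nth_le_nth hinf).mpr hcount
  _ = m := Nat.nth_count hm

private lemma main_aux (a b c x₀ : ℝ) (ha : 0 < a) (hb : 0 ≤ b) (hc : 0 < c) (hx₀ : 2 ≤ x₀)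
    (hθ : ∀ x : ℝ, x₀ ≤ x →
      |chebyshevθ x - x| < a * x * Real.log x ^ b * Real.exp (-c * Real.sqrt (Real.log x)))
    (P Q : ℕ) (hQprime : Q.Prime) (hPQ : P < Q) (hQ2P : Q ≤ 2 * P - 1)
    (hfilter : Finset.filter Nat.Prime (Finset.range Q)
      = Finset.filter Nat.Prime (Finset.range (P + 1)))
    (hmax : max x₀ (Real.exp ((2 * b / c) ^ 2)) ≤ (P : ℝ)) :
    ((Q : ℝ) - P) / P < 3 * a * Real.log P ^ b * Real.exp (-c * Real.sqrt (Real.log P)) := by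
  have hpq : (P : ℝ) < (Q : ℝ) := by exact_mod_cast hPQ
  have hx₀p : x₀ ≤ (P : ℝ) := le_trans (le_max_left _ _) hmax
  have hp2 : (2 : ℝ) ≤ (P : ℝ) := le_trans hx₀ hx₀p
  have hp0 : (0 : ℝ) < (P : ℝ) := by linarith
  have hlogp : 0 < Real.log (P : ℝ) := Real.log_pos (by linarith)
  have hcrit : (2 * b / c) ^ 2 ≤ Real.log (P : ℝ) := by
    rw [← Real.log_exp ((2 * b / c) ^ 2)]
    exact Real.log_le_log (Real.exp_pos _) (le_trans (le_max_right _ _) hmax)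
  set fp : ℝ := Real.log (P : ℝ) ^ b * Real.exp (-c * Real.sqrt (Real.log (P : ℝ))) with hfpdef
  have hfp0 : 0 < fp := mul_pos (Real.rpow_pos_of_pos hlogp b) (Real.exp_pos _)
  set δ : ℝ := min 1 (a * fp) with hδdef
  have hδ0 : 0 < δ := lt_min one_pos (mul_pos ha hfp0)
  have hδ1 : δ ≤ 1 := min_le_left _ _
  have hδafp : δ ≤ a * fp := min_le_right _ _
  have hfloorp : ⌊(P : ℝ)⌋₊ = P := Nat.floor_natCast P
  have hq1p : (P : ℝ) ≤ (Q : ℝ) - 1 := by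
    have : (P : ℝ) + 1 ≤ (Q : ℝ) := by exact_mod_cast hPQ
    linarith
  have hfloorqδ : ⌊(Q : ℝ) - δ⌋₊ = Q - 1 := by
    rw [Nat.floor_eq_iff (by linarith)]
    have hQ1 : 1 ≤ Q := by omega
    push_cast [hQ1]
    constructor <;> linarith
  have hθeq : chebyshevθ ((Q : ℝ) - δ) = chebyshevθ (P : ℝ) := by
    unfold chebyshevθ
    rw [hfloorp, hfloorqδ]
    have h : Q - 1 + 1 = Q := by omega
    rw [h, hfilter]
  have hE1 := hθ (P : ℝ) hx₀p
  have hE2 := hθ ((Q : ℝ) - δ) (by linarith)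
  rw [hθeq] at hE2
  have hlogmono : Real.log (P : ℝ) ≤ Real.log ((Q : ℝ) - δ) :=
    Real.log_le_log hp0 (by linarith)
  have hfle : Real.log ((Q : ℝ) - δ) ^ b * Real.exp (-c * Real.sqrt (Real.log ((Q : ℝ) - δ)))
      ≤ fp := aux_f_mono b c hb hc hlogp hcrit hlogmono
  have hlogqδ : 0 < Real.log ((Q : ℝ) - δ) := lt_of_lt_of_le hlogp hlogmono
  have hfnonneg : 0 ≤ Real.log ((Q : ℝ) - δ) ^ b
      * Real.exp (-c * Real.sqrt (Real.log ((Q : ℝ) - δ))) := by positivity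
  have hEq2 : a * ((Q : ℝ) - δ) * Real.log ((Q : ℝ) - δ) ^ b
      * Real.exp (-c * Real.sqrt (Real.log ((Q : ℝ) - δ))) ≤ a * (Q : ℝ) * fp := by
    have h1 : a * ((Q : ℝ) - δ) ≤ a * (Q : ℝ) := by nlinarith
    have h0 : 0 ≤ a * ((Q : ℝ) - δ) := by nlinarith
    calc a * ((Q : ℝ) - δ) * Real.log ((Q : ℝ) - δ) ^ b
          * Real.exp (-c * Real.sqrt (Real.log ((Q : ℝ) - δ)))
        = (a * ((Q : ℝ) - δ)) * (Real.log ((Q : ℝ) - δ) ^ b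
            * Real.exp (-c * Real.sqrt (Real.log ((Q : ℝ) - δ)))) := by ring
    _ ≤ (a * (Q : ℝ)) * fp := mul_le_mul h1 hfle hfnonneg (by nlinarith)
    _ = a * (Q : ℝ) * fp := by ring
  have habs1 : chebyshevθ (P : ℝ) - (P : ℝ) < a * (P : ℝ) * fp := by
    calc chebyshevθ (P : ℝ) - (P : ℝ) ≤ |chebyshevθ (P : ℝ) - (P : ℝ)| := le_abs_self _
    _ < a * (P : ℝ) * Real.log (P : ℝ) ^ b
        * Real.exp (-c * Real.sqrt (Real.log (P : ℝ))) := hE1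
    _ = a * (P : ℝ) * fp := by rw [hfpdef]; ring
  have habs2 : ((Q : ℝ) - δ) - chebyshevθ (P : ℝ) < a * (Q : ℝ) * fp := by
    calc ((Q : ℝ) - δ) - chebyshevθ (P : ℝ)
        ≤ |chebyshevθ (P : ℝ) - ((Q : ℝ) - δ)| := by
          rw [abs_sub_comm]; exact le_abs_self _
    _ < _ := hE2
    _ ≤ a * (Q : ℝ) * fp := hEq2
  have hq2p : (Q : ℝ) ≤ 2 * (P : ℝ) - 1 := by
    have h1 : (Q : ℝ) ≤ ((2 * P - 1 : ℕ) : ℝ) := by exact_mod_cast hQ2P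
    have h2 : ((2 * P - 1 : ℕ) : ℝ) = 2 * (P : ℝ) - 1 := by
      have hP1 : 1 ≤ 2 * P := by omega
      push_cast [hP1]
      ring
    rw [h2] at h1; exact h1
  have hgap : (Q : ℝ) - (P : ℝ) < 3 * a * (P : ℝ) * fp := by
    have h2 : a * (Q : ℝ) * fp ≤ a * (2 * (P : ℝ) - 1) * fp :=
      mul_le_mul_of_nonneg_right (mul_le_mul_of_nonneg_left hq2p ha.le) hfp0.le
    have he : a * (2 * (P : ℝ) - 1) * fp + a * (P : ℝ) * fp + a * fp
        = 3 * a * (P : ℝ) * fp := by ring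
    linarith
  rw [div_lt_iff₀ hp0]
  calc (Q : ℝ) - (P : ℝ) < 3 * a * (P : ℝ) * fp := hgap
  _ = 3 * a * Real.log (P : ℝ) ^ b * Real.exp (-c * Real.sqrt (Real.log (P : ℝ))) * (P : ℝ) := by
      rw [hfpdef]; ring

theorem lemma_part_ii (a b c x₀ : ℝ) (ha : 0 < a) (hb : 0 ≤ b) (hc : 0 < c) (hx₀ : 2 ≤ x₀)
    (hθ : ∀ x : ℝ, x₀ ≤ x →
      |chebyshevθ x - x| < a * x * Real.log x ^ b * Real.exp (-c * Real.sqrt (Real.log x))) :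
    ∀ n : ℕ, 1 ≤ n → max x₀ (Real.exp ((2 * b / c) ^ 2)) ≤ (nthPrime n : ℝ) →
      primeGap n / (nthPrime n : ℝ) <
        3 * a * Real.log (nthPrime n) ^ b *
          Real.exp (-c * Real.sqrt (Real.log (nthPrime n))) := by
  intro n hn hmax
  obtain ⟨k, rfl⟩ : ∃ k, n = k + 1 := ⟨n - 1, (Nat.succ_pred_eq_of_pos hn).symm⟩
  have hinf := Nat.infinite_setOf_prime
  have hPnth : nthPrime (k + 1) = Nat.nth Nat.Prime k := rfl
  have hQnth : nthPrime (k + 2) = Nat.nth Nat.Prime (k + 1) := rfl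
  have hgapdef : primeGap (k + 1) = (nthPrime (k + 2) : ℝ) - (nthPrime (k + 1) : ℝ) := rfl
  have hPprime : (nthPrime (k + 1)).Prime := by rw [hPnth]; exact Nat.nth_mem_of_infinite hinf k
  have hQprime : (nthPrime (k + 2)).Prime := by
    rw [hQnth]; exact Nat.nth_mem_of_infinite hinf (k + 1)
  have hPQ : nthPrime (k + 1) < nthPrime (k + 2) := by
    rw [hPnth, hQnth]; exact (Nat.nth_lt_nth hinf).mpr (Nat.lt_succ_self k)
  have hP2 : 2 ≤ nthPrime (k + 1) := hPprime.two_le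
  obtain ⟨r, hrp, hr1, hr2⟩ := Nat.exists_prime_lt_and_le_two_mul (nthPrime (k + 1)) (by omega)
  have hQr : nthPrime (k + 2) ≤ r := by
    rw [hQnth]; exact no_prime_between k hrp (by rw [← hPnth]; exact hr1)
  have hQne : nthPrime (k + 2) ≠ 2 * nthPrime (k + 1) := by
    intro h
    have h2 : 2 ∣ nthPrime (k + 2) := ⟨nthPrime (k + 1), h⟩
    have := hQprime.eq_one_or_self_of_dvd 2 h2
    omega
  have hQ2P : nthPrime (k + 2) ≤ 2 * nthPrime (k + 1) - 1 := by omega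
  have hfilter : Finset.filter Nat.Prime (Finset.range (nthPrime (k + 2)))
      = Finset.filter Nat.Prime (Finset.range (nthPrime (k + 1) + 1)) := by
    ext m
    simp only [Finset.mem_filter, Finset.mem_range]
    constructor
    · rintro ⟨hmQ, hmp⟩
      refine ⟨?_, hmp⟩
      by_contra h
      have h1 : Nat.nth Nat.Prime k < m := by rw [← hPnth]; omega
      have h2 := no_prime_between k hmp h1
      rw [← hQnth] at h2; omega
    · rintro ⟨hmP, hmp⟩
      exact ⟨by omega, hmp⟩
  rw [hgapdef]
  exact main_aux a b c x₀ ha hb hc hx₀ hθ (nthPrime (k + 1)) (nthPrime (k + 2))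
    hQprime hPQ hQ2P hfilter hmax
end

section
/- Let θ(x) = ∑_{p prime, p ≤ x} log p, p_n the n-th prime, and g_n = p_{n+1} − p_n. Suppose (Schoenfeld's bound) that |θ(x) − x| < 0.2196138920 · x (log x)^{1/4} exp(−0.3219796502 √(log x)) for all x ≥ 101. Then for every n with p_n ≥ 11 one has g_n / p_n < 2 · 0.2196138920 (log p_n)^{1/4} exp(−0.3219796502 √(log p_n)) / (1 − 0.2196138920 (log p_n)^{1/4} exp(−0.3219796502 √(log p_n))). -/
section Auxiliary

/- ### Numeric bounds on `exp` and `log` -/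

lemma PGaux.exp_le_num {x c : ℝ} (h1 : 0 ≤ x) (h2 : x ≤ 1)
    (hc : 1 + x + x^2/2 + x^3/6 + x^4/24 + x^5/120 + x^5*7/720 ≤ c) : Real.exp x ≤ c := by
  have := Real.exp_bound' h1 h2 (n := 6) (by norm_num)
  refine le_trans (le_trans this ?_) hc
  have h6 : x^6 ≤ x^5 := pow_le_pow_of_le_one h1 h2 (by norm_num)
  have h5 : (0:ℝ) ≤ x^5 := pow_nonneg h1 5
  simp [Finset.sum_range_succ, Nat.factorial]
  nlinarith

lemma PGaux.num_le_exp {x c : ℝ} (h1 : 0 ≤ x)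
    (hc : c ≤ 1 + x + x^2/2 + x^3/6 + x^4/24) : c ≤ Real.exp x := by
  have := Real.sum_le_exp_of_nonneg h1 5
  refine le_trans hc (le_trans ?_ this)
  simp [Finset.sum_range_succ, Nat.factorial]

lemma PGaux.e2_lt : Real.exp 2 < 7.3890560997 := by
  have h : Real.exp 2 = Real.exp 1 ^ 2 := by rw [← Real.exp_nat_mul]; norm_num
  rw [h]
  calc Real.exp 1 ^ 2 < 2.7182818286 ^ 2 :=
        pow_lt_pow_left₀ Real.exp_one_lt_d9 (Real.exp_pos 1).le (by norm_num)
  _ < 7.3890560997 := by norm_num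

lemma PGaux.e4_gt : (54.598150020 : ℝ) < Real.exp 4 := by
  have h : Real.exp 4 = Real.exp 1 ^ 4 := by rw [← Real.exp_nat_mul]; norm_num
  rw [h]
  calc (54.598150020:ℝ) < 2.7182818283 ^ 4 := by norm_num
  _ ≤ Real.exp 1 ^ 4 := pow_le_pow_left₀ (by norm_num) Real.exp_one_gt_d9.le 4

lemma PGaux.e3_lt : Real.exp 3 < 20.0855369264 := by
  have h : Real.exp 3 = Real.exp 1 ^ 3 := by rw [← Real.exp_nat_mul]; norm_num
  rw [h]
  calc Real.exp 1 ^ 3 < 2.7182818286 ^ 3 :=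
        pow_lt_pow_left₀ Real.exp_one_lt_d9 (Real.exp_pos 1).le (by norm_num)
  _ < 20.0855369264 := by norm_num

lemma PGaux.log101_ge : 3 ≤ Real.log 101 := by
  rw [Real.le_log_iff_exp_le (by norm_num)]
  linarith [PGaux.e3_lt]

lemma PGaux.log_le_five {x : ℝ} (h1 : 0 < x) (h : x ≤ 101) : Real.log x ≤ 5 := by
  rw [Real.log_le_iff_le_exp h1]
  have h5 : Real.exp 5 = Real.exp 4 * Real.exp 1 := by rw [← Real.exp_add]; norm_num
  rw [h5]
  nlinarith [Real.exp_one_gt_d9, PGaux.e4_gt, Real.exp_pos 1, Real.exp_pos 4]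

lemma PGaux.log11_ge : 2.24 ≤ Real.log 11 := by
  rw [Real.le_log_iff_exp_le (by norm_num)]
  have h24 : Real.exp 0.24 ≤ 1.271257 := by
    apply PGaux.exp_le_num (by norm_num) (by norm_num); norm_num
  have h : Real.exp 2.24 = Real.exp 2 * Real.exp 0.24 := by rw [← Real.exp_add]; norm_num
  rw [h]
  nlinarith [PGaux.e2_lt, Real.exp_pos 2, Real.exp_pos 0.24]

lemma PGaux.log97_le : Real.log 97 ≤ 4.59 := by
  rw [Real.log_le_iff_le_exp (by norm_num)]
  have h59 : (1.8033 : ℝ) ≤ Real.exp 0.59 := by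
    apply PGaux.num_le_exp (by norm_num); norm_num
  have h : Real.exp 4.59 = Real.exp 4 * Real.exp 0.59 := by rw [← Real.exp_add]; norm_num
  rw [h]
  nlinarith [PGaux.e4_gt, Real.exp_pos 4, Real.exp_pos 0.59]

lemma PGaux.exp69_lt : Real.exp 0.69 < 2 := by
  apply lt_of_le_of_lt (PGaux.exp_le_num (x := 0.69) (by norm_num) (by norm_num) le_rfl)
  norm_num

/- ### The relative error function and its monotonicity -/

/-- The Schoenfeld relative error, as a function of `s = log x`. -/
noncomputable def PGaux.epsf (s : ℝ) : ℝ :=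
  0.2196138920 * s ^ ((1 : ℝ) / 4) * Real.exp (-0.3219796502 * Real.sqrt s)

namespace PGaux

lemma epsf_hasDeriv {s : ℝ} (hs : 0 < s) :
    HasDerivAt epsf
      (0.2196138920 * ((1/4) * s ^ ((1:ℝ)/4 - 1)) * Real.exp (-0.3219796502 * Real.sqrt s)
       + (0.2196138920 * s ^ ((1:ℝ)/4)) *
          (Real.exp (-0.3219796502 * Real.sqrt s) * (-0.3219796502 * (1 / (2 * Real.sqrt s))))) s := by
  have h1 : HasDerivAt (fun s : ℝ => s ^ ((1:ℝ)/4)) ((1/4) * s ^ ((1:ℝ)/4 - 1)) s := by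
    simpa using Real.hasDerivAt_rpow_const (p := (1:ℝ)/4) (Or.inl hs.ne')
  have h2 : HasDerivAt Real.sqrt (1 / (2 * Real.sqrt s)) s := Real.hasDerivAt_sqrt hs.ne'
  have h3 := ((h2.const_mul (-0.3219796502 : ℝ)).exp)
  exact (h1.const_mul (0.2196138920 : ℝ)).mul h3

lemma epsf_deriv_neg {s : ℝ} (hs : 3 < s) : deriv epsf s < 0 := by
  have hs0 : 0 < s := by linarith
  rw [(epsf_hasDeriv hs0).deriv]
  have hS : 0 < Real.sqrt s := Real.sqrt_pos.mpr hs0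
  have hS17 : 1.7 ≤ Real.sqrt s := by
    rw [show (1.7:ℝ) = Real.sqrt (1.7^2) by rw [Real.sqrt_sq] ; norm_num]
    exact Real.sqrt_le_sqrt (by nlinarith)
  have hSu : Real.sqrt s * (1 / (2 * Real.sqrt s)) = 1/2 := by field_simp
  have hss : Real.sqrt s * Real.sqrt s = s := Real.mul_self_sqrt hs0.le
  have hA : 0 < s ^ ((1:ℝ)/4 - 1) := Real.rpow_pos_of_pos hs0 _
  have hE : 0 < Real.exp (-0.3219796502 * Real.sqrt s) := Real.exp_pos _
  have hBA : s ^ ((1:ℝ)/4) = s ^ ((1:ℝ)/4 - 1) * s := by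
    rw [show s ^ ((1:ℝ)/4 - 1) * s = s ^ ((1:ℝ)/4 - 1) * s ^ (1:ℝ) by rw [Real.rpow_one],
      ← Real.rpow_add hs0]; norm_num
  rw [hBA]
  set A := s ^ ((1:ℝ)/4 - 1)
  set E := Real.exp (-0.3219796502 * Real.sqrt s)
  set S := Real.sqrt s
  have hu : 0 < 1 / (2 * S) := by positivity
  nlinarith [mul_pos (mul_pos hA hE) hS, mul_pos hA hE,
    mul_pos (mul_pos (mul_pos hA hE) hS) hu,
    mul_le_mul_of_nonneg_right hS17 (le_of_lt (mul_pos (mul_pos hA hE) hu))]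

lemma epsf_anti : StrictAntiOn epsf (Set.Ici 3) := by
  apply strictAntiOn_of_deriv_neg (convex_Ici 3)
  · apply ContinuousOn.mul
    · apply ContinuousOn.mul continuousOn_const
      intro s hs
      exact (Real.continuousAt_rpow_const s _
        (Or.inl (by simp at hs; positivity))).continuousWithinAt
    · exact (Real.continuous_exp.comp ((continuous_const.mul Real.continuous_sqrt))).continuousOn
  · intro s hs
    rw [interior_Ici] at hs
    exact epsf_deriv_neg hs

/-- The Schoenfeld relative error as a function of `x`. -/
noncomputable def eps (x : ℝ) : ℝ := epsf (Real.log x)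

lemma eps_anti {a b : ℝ} (ha : 101 ≤ a) (hab : a < b) : eps b < eps a := by
  have h0a : (0:ℝ) < a := by linarith
  have h3a : 3 ≤ Real.log a :=
    le_trans log101_ge (Real.log_le_log (by norm_num) ha)
  exact epsf_anti (Set.mem_Ici.mpr h3a)
    (Set.mem_Ici.mpr (le_trans h3a (Real.log_le_log h0a hab.le)))
    (Real.log_lt_log h0a hab)

lemma eps_anti_le {a b : ℝ} (ha : 101 ≤ a) (hab : a ≤ b) : eps b ≤ eps a := by
  rcases eq_or_lt_of_le hab with rfl | h
  · exact le_rfl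
  · exact (eps_anti ha h).le

lemma rpow4_le {a L : ℝ} (ha : 0 ≤ a) (h : a^4 ≤ L) : a ≤ L ^ ((1:ℝ)/4) := by
  have h0 : (0:ℝ) ≤ a^4 := pow_nonneg ha 4
  calc a = (a^4) ^ ((1:ℝ)/4) := by
        rw [show ((1:ℝ)/4) = ((4:ℕ):ℝ)⁻¹ by norm_num,
          Real.pow_rpow_inv_natCast ha (by norm_num)]
  _ ≤ L ^ ((1:ℝ)/4) := Real.rpow_le_rpow h0 h (by norm_num)

lemma rpow4_lt {L b : ℝ} (hL : 0 ≤ L) (hb : 0 ≤ b) (h : L < b^4) : L ^ ((1:ℝ)/4) < b := by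
  rw [show ((1:ℝ)/4) = ((4:ℕ):ℝ)⁻¹ by norm_num]
  calc L ^ (((4:ℕ):ℝ))⁻¹ < (b^4) ^ (((4:ℕ):ℝ))⁻¹ := Real.rpow_lt_rpow hL h (by norm_num)
  _ = b := Real.pow_rpow_inv_natCast hb (by norm_num)

/-- crude upper bound: `eps x < 1` whenever `0 ≤ log x ≤ 5`. -/
lemma epsf_lt_one {s : ℝ} (h0 : 0 ≤ s) (h5 : s ≤ 5) : epsf s < 1 := by
  unfold epsf
  have hE : Real.exp (-0.3219796502 * Real.sqrt s) ≤ 1 := by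
    rw [Real.exp_le_one_iff]
    nlinarith [Real.sqrt_nonneg s]
  have hr : s ^ ((1:ℝ)/4) < 1.5 := rpow4_lt h0 (by norm_num) (by nlinarith)
  have hrpos : (0:ℝ) ≤ s ^ ((1:ℝ)/4) := Real.rpow_nonneg h0 _
  nlinarith [Real.exp_pos (-0.3219796502 * Real.sqrt s)]

lemma eps_lt_one {x : ℝ} (h1 : 1 ≤ x) (h : x ≤ 101) : eps x < 1 :=
  epsf_lt_one (Real.log_nonneg h1) (log_le_five (by linarith) h)

lemma eps_lt_one' {x : ℝ} (h : 101 ≤ x) : eps x < 1 :=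
  lt_of_le_of_lt (eps_anti_le le_rfl h) (eps_lt_one (by norm_num) le_rfl)

/-- lower bound on the small range `[11, 97]`. -/
lemma eps_small {x : ℝ} (h1 : 11 ≤ x) (h2 : x ≤ 97) : 0.1342 < eps x := by
  have hL1 : (2.24:ℝ) ≤ Real.log x := le_trans log11_ge (Real.log_le_log (by norm_num) h1)
  have hL2 : Real.log x ≤ 4.59 :=
    le_trans (Real.log_le_log (by linarith) h2) log97_le
  have hr : (1.223:ℝ) ≤ Real.log x ^ ((1:ℝ)/4) := rpow4_le (by norm_num) (by nlinarith)
  have hS : Real.sqrt (Real.log x) ≤ 2.14243 := by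
    rw [show (2.14243:ℝ) = Real.sqrt (2.14243^2) by rw [Real.sqrt_sq]; norm_num]
    exact Real.sqrt_le_sqrt (by nlinarith)
  have hE : Real.exp (-0.69) ≤ Real.exp (-0.3219796502 * Real.sqrt (Real.log x)) := by
    apply Real.exp_le_exp.mpr
    nlinarith [Real.sqrt_nonneg (Real.log x)]
  have hE2 : (1/2 : ℝ) < Real.exp (-0.69) := by
    rw [Real.exp_neg, show (1/2 : ℝ) = 2⁻¹ by norm_num]
    exact inv_strictAnti₀ (Real.exp_pos 0.69) exp69_lt
  unfold eps epsf
  nlinarith [Real.exp_pos (-0.69)]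

end PGaux
end Auxiliary

namespace PGaux

lemma nth_succ_le {k q : ℕ} (hq : q.Prime) (h : Nat.nth Nat.Prime k < q) :
    Nat.nth Nat.Prime (k+1) ≤ q := by
  have hinf := Nat.infinite_setOf_prime
  have hqc : Nat.nth Nat.Prime (Nat.count Nat.Prime q) = q := Nat.nth_count hq
  have hk : k < Nat.count Nat.Prime q := by
    by_contra hle
    push_neg at hle
    have := Nat.nth_monotone hinf hle
    rw [hqc] at this
    exact absurd h (not_lt.mpr this)
  calc Nat.nth Nat.Prime (k+1) ≤ Nat.nth Nat.Prime (Nat.count Nat.Prime q) :=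
        Nat.nth_monotone hinf hk
  _ = q := hqc

lemma theta_const {k : ℕ} {x : ℝ} (hpx : (Nat.nth Nat.Prime k : ℝ) ≤ x)
    (hxq : x < (Nat.nth Nat.Prime (k+1) : ℝ)) :
    chebyshevθ x = chebyshevθ (Nat.nth Nat.Prime k) := by
  have hx0 : (0:ℝ) ≤ x := le_trans (by positivity) hpx
  unfold chebyshevθ
  rw [Nat.floor_natCast]
  congr 1
  apply Finset.ext
  intro r
  simp only [Finset.mem_filter, Finset.mem_range, Nat.lt_succ_iff]
  constructor
  · rintro ⟨hr, hrp⟩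
    refine ⟨?_, hrp⟩
    by_contra hgt
    push_neg at hgt
    have h2 : Nat.nth Nat.Prime (k+1) ≤ r := nth_succ_le hrp hgt
    have hrx : (r:ℝ) ≤ x := le_trans (Nat.cast_le.mpr hr) (Nat.floor_le hx0)
    have : ((Nat.nth Nat.Prime (k+1) : ℕ) : ℝ) ≤ (r:ℝ) := Nat.cast_le.mpr h2
    linarith
  · rintro ⟨hr, hrp⟩
    exact ⟨le_trans hr (Nat.le_floor hpx), hrp⟩

lemma next_nth {k p q : ℕ} (hp : p.Prime) (hq : q.Prime) (hk : Nat.nth Nat.Prime k = p)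
    (hc : Nat.count Nat.Prime q = Nat.count Nat.Prime p + 1) :
    Nat.nth Nat.Prime (k+1) = q := by
  have hk' : k = Nat.count Nat.Prime p :=
    Nat.nth_injective Nat.infinite_setOf_prime (by rw [hk, Nat.nth_count hp])
  rw [hk', ← hc, Nat.nth_count hq]

lemma theta_lt {x : ℝ}
    (hθ : ∀ x : ℝ, 101 ≤ x → |chebyshevθ x - x| <
      0.2196138920 * x * Real.log x ^ ((1 : ℝ) / 4) *
        Real.exp (-0.3219796502 * Real.sqrt (Real.log x)))
    (hx : 101 ≤ x) :
    chebyshevθ x < x * (1 + eps x) ∧ x * (1 - eps x) < chebyshevθ x := by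
  have h := hθ x hx
  rw [abs_lt] at h
  unfold eps epsf
  constructor <;> nlinarith [h.1, h.2]

lemma key
    (hθ : ∀ x : ℝ, 101 ≤ x → |chebyshevθ x - x| <
      0.2196138920 * x * Real.log x ^ ((1 : ℝ) / 4) *
        Real.exp (-0.3219796502 * Real.sqrt (Real.log x)))
    {k : ℕ} (hp101 : 101 ≤ Nat.nth Nat.Prime k) :
    (Nat.nth Nat.Prime (k+1) : ℝ) * (1 - eps (Nat.nth Nat.Prime k)) <
      (Nat.nth Nat.Prime k : ℝ) * (1 + eps (Nat.nth Nat.Prime k)) := by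
  have hinf := Nat.infinite_setOf_prime
  set p := Nat.nth Nat.Prime k with hp_def
  set q := Nat.nth Nat.Prime (k+1) with hq_def
  have hpq : p < q := (Nat.nth_lt_nth hinf).mpr (lt_add_one k)
  have hq2 : p + 2 ≤ q := by
    rcases (Nat.prime_nth_prime k).eq_two_or_odd' with h2 | hodd
    · omega
    · rcases (Nat.prime_nth_prime (k+1)).eq_two_or_odd' with h2' | hodd'
      · omega
      · obtain ⟨a, ha⟩ := hodd
        obtain ⟨b, hb⟩ := hodd'
        omega
  have hpr101 : (101:ℝ) ≤ (p:ℝ) := by exact_mod_cast hp101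
  have hqr : (p:ℝ) + 2 ≤ (q:ℝ) := by exact_mod_cast hq2
  set ε := eps (p:ℝ) with hε_def
  set ε₀ := eps ((p:ℝ) + 1) with hε₀_def
  have hε0lt : ε₀ < ε := eps_anti hpr101 (by linarith)
  have hε01 : ε₀ < 1 := eps_lt_one' (by linarith)
  have h1ε0 : 0 < 1 - ε₀ := by linarith
  have hθp : chebyshevθ (p:ℝ) < (p:ℝ) * (1 + ε) := (theta_lt hθ hpr101).1
  have claim : (q:ℝ) * (1 - ε₀) ≤ (p:ℝ) * (1 + ε) := by
    by_contra hcon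
    push_neg at hcon
    set x := max ((p:ℝ) * (1 + ε) / (1 - ε₀)) ((p:ℝ) + 1) with hx_def
    have hx1 : (p:ℝ) + 1 ≤ x := le_max_right _ _
    have hx101 : (101:ℝ) ≤ x := by linarith
    have hxq : x < (q:ℝ) := by
      apply max_lt
      · exact (div_lt_iff₀ h1ε0).mpr (by linarith)
      · linarith
    have hθx : chebyshevθ x = chebyshevθ (p:ℝ) := theta_const (by linarith) hxq
    have hlow : x * (1 - eps x) < chebyshevθ x := (theta_lt hθ hx101).2
    have heps : eps x ≤ ε₀ := eps_anti_le (by linarith) hx1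
    have hx0 : (0:ℝ) < x := by linarith
    have hxB : (p:ℝ) * (1 + ε) / (1 - ε₀) ≤ x := le_max_left _ _
    rw [hθx] at hlow
    have h1 : x * (1 - ε₀) ≤ x * (1 - eps x) :=
      mul_le_mul_of_nonneg_left (by linarith) hx0.le
    have h2 : x * (1 - ε₀) < (p:ℝ) * (1 + ε) := by linarith
    have h3 : x < (p:ℝ) * (1 + ε) / (1 - ε₀) := (lt_div_iff₀ h1ε0).mpr h2
    linarith
  have hq0 : (0:ℝ) < (q:ℝ) := by linarith
  nlinarith [claim, hε0lt, hq0]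

lemma small_case {k p r : ℕ} (hkp : Nat.nth Nat.Prime k = p) (hr : r.Prime)
    (h11 : 11 ≤ p) (h97 : p ≤ 97) (hpr : p < r) (hgap : 100 * (r - p) ≤ 31 * p) :
    ((Nat.nth Nat.Prime (k+1) : ℝ) - (p:ℝ)) / (p:ℝ) <
      2 * eps (p:ℝ) / (1 - eps (p:ℝ)) := by
  have hq : Nat.nth Nat.Prime (k+1) ≤ r := nth_succ_le hr (by omega)
  have h11' : (11:ℝ) ≤ (p:ℝ) := by exact_mod_cast h11
  have h97' : (p:ℝ) ≤ 97 := by exact_mod_cast h97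
  have hε := eps_small h11' h97'
  have hε1 : eps (p:ℝ) < 1 := eps_lt_one (by linarith) (by linarith)
  have hp0 : (0:ℝ) < (p:ℝ) := by linarith
  rw [div_lt_div_iff₀ hp0 (by linarith)]
  have hqr : ((Nat.nth Nat.Prime (k+1) : ℕ) : ℝ) ≤ (r:ℝ) := by exact_mod_cast hq
  have hgap' : 100 * ((r:ℝ) - (p:ℝ)) ≤ 31 * (p:ℝ) := by
    have : (100:ℝ) * ((r:ℕ) - (p:ℕ) : ℕ) ≤ 31 * (p:ℝ) := by exact_mod_cast hgap
    rwa [Nat.cast_sub hpr.le] at this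
  nlinarith [hε, hε1, hp0, hqr, hgap']

end PGaux

theorem primeGap_schoenfeld
    (hθ : ∀ x : ℝ, 101 ≤ x → |chebyshevθ x - x| <
      0.2196138920 * x * Real.log x ^ ((1 : ℝ) / 4) *
        Real.exp (-0.3219796502 * Real.sqrt (Real.log x))) :
    ∀ n : ℕ, 1 ≤ n → 11 ≤ (nthPrime n : ℝ) →
      primeGap n / (nthPrime n : ℝ) <
        2 * (0.2196138920 * Real.log (nthPrime n) ^ ((1 : ℝ) / 4) *
              Real.exp (-0.3219796502 * Real.sqrt (Real.log (nthPrime n)))) /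
          (1 - 0.2196138920 * Real.log (nthPrime n) ^ ((1 : ℝ) / 4) *
              Real.exp (-0.3219796502 * Real.sqrt (Real.log (nthPrime n)))) := by
  intro n hn h11
  obtain ⟨k, rfl⟩ : ∃ k, n = k + 1 := ⟨n - 1, (Nat.succ_pred_eq_of_pos hn).symm⟩
  unfold nthPrime at h11
  unfold primeGap nthPrime
  simp only [Nat.add_sub_cancel] at h11 ⊢
  have hp : (Nat.nth Nat.Prime k).Prime := Nat.prime_nth_prime k
  obtain ⟨P, hkp⟩ : ∃ P, Nat.nth Nat.Prime k = P := ⟨_, rfl⟩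
  rw [hkp] at h11 hp ⊢
  have h11n : 11 ≤ P := by exact_mod_cast h11
  rcases le_or_gt P 100 with hsmall | hbig
  · interval_cases P
    · exact PGaux.small_case (r := 13) hkp (by norm_num) (by norm_num) (by norm_num) (by norm_num) (by norm_num)
    · exact absurd hp (by norm_num)
    · exact PGaux.small_case (r := 17) hkp (by norm_num) (by norm_num) (by norm_num) (by norm_num) (by norm_num)
    · exact absurd hp (by norm_num)
    · exact absurd hp (by norm_num)
    · exact absurd hp (by norm_num)
    · exact PGaux.small_case (r := 19) hkp (by norm_num) (by norm_num) (by norm_num) (by norm_num) (by norm_num)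
    · exact absurd hp (by norm_num)
    · exact PGaux.small_case (r := 23) hkp (by norm_num) (by norm_num) (by norm_num) (by norm_num) (by norm_num)
    · exact absurd hp (by norm_num)
    · exact absurd hp (by norm_num)
    · exact absurd hp (by norm_num)
    · exact PGaux.small_case (r := 29) hkp (by norm_num) (by norm_num) (by norm_num) (by norm_num) (by norm_num)
    · exact absurd hp (by norm_num)
    · exact absurd hp (by norm_num)
    · exact absurd hp (by norm_num)
    · exact absurd hp (by norm_num)
    · exact absurd hp (by norm_num)
    · exact PGaux.small_case (r := 31) hkp (by norm_num) (by norm_num) (by norm_num) (by norm_num) (by norm_num)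
    · exact absurd hp (by norm_num)
    · exact PGaux.small_case (r := 37) hkp (by norm_num) (by norm_num) (by norm_num) (by norm_num) (by norm_num)
    · exact absurd hp (by norm_num)
    · exact absurd hp (by norm_num)
    · exact absurd hp (by norm_num)
    · exact absurd hp (by norm_num)
    · exact absurd hp (by norm_num)
    · exact PGaux.small_case (r := 41) hkp (by norm_num) (by norm_num) (by norm_num) (by norm_num) (by norm_num)
    · exact absurd hp (by norm_num)
    · exact absurd hp (by norm_num)
    · exact absurd hp (by norm_num)
    · exact PGaux.small_case (r := 43) hkp (by norm_num) (by norm_num) (by norm_num) (by norm_num) (by norm_num)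
    · exact absurd hp (by norm_num)
    · exact PGaux.small_case (r := 47) hkp (by norm_num) (by norm_num) (by norm_num) (by norm_num) (by norm_num)
    · exact absurd hp (by norm_num)
    · exact absurd hp (by norm_num)
    · exact absurd hp (by norm_num)
    · exact PGaux.small_case (r := 53) hkp (by norm_num) (by norm_num) (by norm_num) (by norm_num) (by norm_num)
    · exact absurd hp (by norm_num)
    · exact absurd hp (by norm_num)
    · exact absurd hp (by norm_num)
    · exact absurd hp (by norm_num)
    · exact absurd hp (by norm_num)
    · exact PGaux.small_case (r := 59) hkp (by norm_num) (by norm_num) (by norm_num) (by norm_num) (by norm_num)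
    · exact absurd hp (by norm_num)
    · exact absurd hp (by norm_num)
    · exact absurd hp (by norm_num)
    · exact absurd hp (by norm_num)
    · exact absurd hp (by norm_num)
    · exact PGaux.small_case (r := 61) hkp (by norm_num) (by norm_num) (by norm_num) (by norm_num) (by norm_num)
    · exact absurd hp (by norm_num)
    · exact PGaux.small_case (r := 67) hkp (by norm_num) (by norm_num) (by norm_num) (by norm_num) (by norm_num)
    · exact absurd hp (by norm_num)
    · exact absurd hp (by norm_num)
    · exact absurd hp (by norm_num)
    · exact absurd hp (by norm_num)
    · exact absurd hp (by norm_num)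
    · exact PGaux.small_case (r := 71) hkp (by norm_num) (by norm_num) (by norm_num) (by norm_num) (by norm_num)
    · exact absurd hp (by norm_num)
    · exact absurd hp (by norm_num)
    · exact absurd hp (by norm_num)
    · exact PGaux.small_case (r := 73) hkp (by norm_num) (by norm_num) (by norm_num) (by norm_num) (by norm_num)
    · exact absurd hp (by norm_num)
    · exact PGaux.small_case (r := 79) hkp (by norm_num) (by norm_num) (by norm_num) (by norm_num) (by norm_num)
    · exact absurd hp (by norm_num)
    · exact absurd hp (by norm_num)
    · exact absurd hp (by norm_num)
    · exact absurd hp (by norm_num)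
    · exact absurd hp (by norm_num)
    · exact PGaux.small_case (r := 83) hkp (by norm_num) (by norm_num) (by norm_num) (by norm_num) (by norm_num)
    · exact absurd hp (by norm_num)
    · exact absurd hp (by norm_num)
    · exact absurd hp (by norm_num)
    · exact PGaux.small_case (r := 89) hkp (by norm_num) (by norm_num) (by norm_num) (by norm_num) (by norm_num)
    · exact absurd hp (by norm_num)
    · exact absurd hp (by norm_num)
    · exact absurd hp (by norm_num)
    · exact absurd hp (by norm_num)
    · exact absurd hp (by norm_num)
    · exact PGaux.small_case (r := 97) hkp (by norm_num) (by norm_num) (by norm_num) (by norm_num) (by norm_num)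
    · exact absurd hp (by norm_num)
    · exact absurd hp (by norm_num)
    · exact absurd hp (by norm_num)
    · exact absurd hp (by norm_num)
    · exact absurd hp (by norm_num)
    · exact absurd hp (by norm_num)
    · exact absurd hp (by norm_num)
    · exact PGaux.small_case (r := 101) hkp (by norm_num) (by norm_num) (by norm_num) (by norm_num) (by norm_num)
    · exact absurd hp (by norm_num)
    · exact absurd hp (by norm_num)
    · exact absurd hp (by norm_num)
  · rw [← hkp] at hbig ⊢
    have hk := PGaux.key hθ hbig
    have hpr101 : (101:ℝ) ≤ (Nat.nth Nat.Prime k : ℝ) := by exact_mod_cast hbig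
    have hε1 : PGaux.eps (Nat.nth Nat.Prime k : ℝ) < 1 := PGaux.eps_lt_one' hpr101
    have hp0 : (0:ℝ) < (Nat.nth Nat.Prime k : ℝ) := by linarith
    show ((Nat.nth Nat.Prime (k+1) : ℝ) - (Nat.nth Nat.Prime k : ℝ)) / _ <
      2 * PGaux.eps (Nat.nth Nat.Prime k : ℝ) / (1 - PGaux.eps (Nat.nth Nat.Prime k : ℝ))
    rw [div_lt_div_iff₀ hp0 (by linarith)]
    nlinarith [hk]
end

section
/- Let θ(x) = ∑_{p prime, p ≤ x} log p, p_n the n-th prime, and g_n = p_{n+1} − p_n. Suppose (relaxed Schoenfeld bound) that |θ(x) − x| < (1/4) x (log x)^{1/4} exp(−√(log x)/4) for all x ≥ 31. Then for every n with p_n ≥ 11 one has g_n / p_n < (1/2)(log p_n)^{1/4} exp(−√(log p_n)/4) / (1 − (1/4)(log p_n)^{1/4} exp(−√(log p_n)/4)). -/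
section Aux

/-- `E t = √t · exp(-t/4)`. -/
noncomputable def Efun (t : ℝ) : ℝ := Real.sqrt t * Real.exp (-t / 4)

/-- The relative error term `ε(x) = (1/4)(log x)^{1/4} exp(-√(log x)/4)`. -/
noncomputable def epsF (x : ℝ) : ℝ :=
  1 / 4 * Real.log x ^ ((1 : ℝ) / 4) * Real.exp (-Real.sqrt (Real.log x) / 4)

lemma Efun_nonneg (t : ℝ) : 0 ≤ Efun t := by
  unfold Efun; positivity

lemma Efun_pos {t : ℝ} (ht : 0 < t) : 0 < Efun t := by
  unfold Efun
  exact mul_pos (Real.sqrt_pos.mpr ht) (Real.exp_pos _)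

lemma Efun_le_one {t : ℝ} (ht : 0 ≤ t) : Efun t ≤ 1 := by
  have h1 : Real.sqrt t ≤ Real.exp (t / 4) := by
    have h2 : Real.sqrt t ≤ 1 + t / 4 := by
      nlinarith [Real.sq_sqrt ht, Real.sqrt_nonneg t, sq_nonneg (1 - Real.sqrt t / 2)]
    exact h2.trans (by linarith [Real.add_one_le_exp (t / 4)])
  have h3 : Real.exp (-t/4) > 0 := Real.exp_pos _
  calc Efun t ≤ Real.exp (t/4) * Real.exp (-t/4) := by
        unfold Efun; exact mul_le_mul_of_nonneg_right h1 h3.le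
    _ = 1 := by rw [← Real.exp_add]; ring_nf; exact Real.exp_zero

lemma Efun_anti {a b : ℝ} (ha : 2 ≤ a) (hab : a ≤ b) : Efun b ≤ Efun a := by
  have ha0 : (0:ℝ) < a := by linarith
  have hu0 : (0:ℝ) ≤ (b - a) / (2 * a) := by
    apply div_nonneg (by linarith) (by linarith)
  have hsb : Real.sqrt b ≤ Real.sqrt a * (1 + (b - a) / (2 * a)) := by
    have hc0 : 0 ≤ Real.sqrt a * (1 + (b - a) / (2 * a)) := by positivity
    have hb2 : b ≤ (Real.sqrt a * (1 + (b - a) / (2 * a)))^2 := by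
      have hsq : Real.sqrt a ^ 2 = a := Real.sq_sqrt ha0.le
      have h2a : (2*a) ≠ 0 := by positivity
      rw [mul_pow, hsq]
      have e1 : (1 + (b - a) / (2 * a))^2 = 1 + (b-a)/a + ((b-a)/(2*a))^2 := by
        field_simp; ring
      rw [e1]
      have e2 : a * (1 + (b - a)/a + ((b-a)/(2*a))^2) = b + a * ((b-a)/(2*a))^2 := by
        field_simp; ring
      rw [e2]
      nlinarith [sq_nonneg ((b-a)/(2*a))]
    calc Real.sqrt b ≤ Real.sqrt ((Real.sqrt a * (1 + (b - a) / (2 * a)))^2) :=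
          Real.sqrt_le_sqrt hb2
      _ = _ := Real.sqrt_sq hc0
  have hexp : 1 + (b - a) / (2 * a) ≤ Real.exp ((b - a) / 4) := by
    have h1 : (b - a) / (2 * a) ≤ (b - a) / 4 := by
      rw [div_le_div_iff₀ (by linarith) (by norm_num)]
      nlinarith
    linarith [Real.add_one_le_exp ((b - a) / 4)]
  have hstep : Efun b ≤ Real.sqrt a * Real.exp ((b-a)/4) * Real.exp (-b/4) := by
    unfold Efun
    apply mul_le_mul_of_nonneg_right (hsb.trans ?_) (Real.exp_pos _).le
    exact mul_le_mul_of_nonneg_left hexp (Real.sqrt_nonneg a)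
  calc Efun b ≤ Real.sqrt a * Real.exp ((b-a)/4) * Real.exp (-b/4) := hstep
    _ = Efun a := by
        unfold Efun
        rw [mul_assoc, ← Real.exp_add]
        ring_nf

lemma rpow_quarter {y : ℝ} (hy : 0 ≤ y) :
    y ^ ((1:ℝ)/4) = Real.sqrt (Real.sqrt y) := by
  rw [Real.sqrt_eq_rpow, Real.sqrt_eq_rpow, ← Real.rpow_mul hy]
  norm_num

lemma epsF_eq {x : ℝ} (hx : 1 ≤ x) :
    epsF x = Efun (Real.sqrt (Real.log x)) / 4 := by
  have h0 : 0 ≤ Real.log x := Real.log_nonneg hx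
  unfold epsF Efun
  rw [rpow_quarter h0]
  ring

lemma epsF_le_quarter {x : ℝ} (hx : 1 ≤ x) : epsF x ≤ 1 / 4 := by
  rw [epsF_eq hx]
  have := Efun_le_one (Real.sqrt_nonneg (Real.log x))
  linarith

lemma epsF_pos {x : ℝ} (hx : 2 ≤ x) : 0 < epsF x := by
  rw [epsF_eq (by linarith)]
  have h0 : 0 < Real.log x := Real.log_pos (by linarith)
  have := Efun_pos (Real.sqrt_pos.mpr h0)
  linarith

lemma exp_pow_four : Real.exp 4 = (Real.exp 1)^4 := by
  rw [← Real.exp_nat_mul]; norm_num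

lemma exp_four_lt : Real.exp 4 < 55 := by
  rw [exp_pow_four]
  calc (Real.exp 1)^4 < 2.7182818286^4 :=
        pow_lt_pow_left₀ Real.exp_one_lt_d9 (Real.exp_pos 1).le (by norm_num)
    _ < 55 := by norm_num

lemma lt_exp_four : (53:ℝ) < Real.exp 4 := by
  rw [exp_pow_four]
  calc (53:ℝ) < 2.7182818283^4 := by norm_num
    _ < (Real.exp 1)^4 :=
        pow_lt_pow_left₀ Real.exp_one_gt_d9 (by norm_num) (by norm_num)

lemma exp_quarter_le : Real.exp (0.25:ℝ) ≤ 4/3 := by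
  have h0 : (0.75:ℝ) ≤ Real.exp (-(0.25:ℝ)) := by
    linarith [Real.add_one_le_exp (-(0.25:ℝ))]
  have h2 : Real.exp (0.25:ℝ) = (Real.exp (-(0.25:ℝ)))⁻¹ := by
    rw [← Real.exp_neg]; norm_num
  rw [h2]
  calc (Real.exp (-(0.25:ℝ)))⁻¹ ≤ (0.75:ℝ)⁻¹ :=
        inv_anti₀ (by norm_num) h0
    _ ≤ 4/3 := by norm_num

lemma exp_225_lt : Real.exp 2.25 < 11 := by
  have h4 : Real.exp 2.25 = (Real.exp 1)^2 * Real.exp 0.25 := by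
    rw [← Real.exp_nat_mul, ← Real.exp_add]; norm_num
  rw [h4]
  have h5 : (Real.exp 1)^2 < 2.7182818286^2 :=
    pow_lt_pow_left₀ Real.exp_one_lt_d9 (Real.exp_pos 1).le (by norm_num)
  nlinarith [exp_quarter_le, Real.exp_pos (0.25:ℝ), Real.exp_pos 1]

lemma exp_half_lt : Real.exp (1/2) < 1.65 := by
  have h : (Real.exp (1/2))^2 = Real.exp 1 := by
    rw [← Real.exp_nat_mul]; norm_num
  nlinarith [Real.exp_one_lt_d9, Real.exp_pos ((1:ℝ)/2)]

/-- On `[11, 53]` the error term is at least `1/6`. -/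
lemma epsF_lb {x : ℝ} (h11 : 11 ≤ x) (h53 : x ≤ 53) : 1/6 ≤ epsF x := by
  have hx0 : (0:ℝ) < x := by linarith
  have hlog_lb : (2.25:ℝ) ≤ Real.log x := by
    rw [Real.le_log_iff_exp_le hx0]
    linarith [exp_225_lt]
  have hlog_ub : Real.log x ≤ 4 := by
    rw [Real.log_le_iff_le_exp hx0]
    linarith [lt_exp_four]
  set t := Real.sqrt (Real.log x) with ht
  have ht_lb : (1.5:ℝ) ≤ t := by
    rw [ht]
    rw [show (1.5:ℝ) = Real.sqrt (1.5^2) from (Real.sqrt_sq (by norm_num)).symm]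
    apply Real.sqrt_le_sqrt; norm_num; linarith
  have ht_ub : t ≤ 2 := by
    rw [ht, show (2:ℝ) = Real.sqrt (2^2) from (Real.sqrt_sq (by norm_num)).symm]
    apply Real.sqrt_le_sqrt; norm_num; linarith
  have hst : (1.22:ℝ) ≤ Real.sqrt t := by
    rw [show (1.22:ℝ) = Real.sqrt (1.22^2) from (Real.sqrt_sq (by norm_num)).symm]
    apply Real.sqrt_le_sqrt; nlinarith
  have hexp : (1/1.65 : ℝ) ≤ Real.exp (-t/4) := by
    have h1 : Real.exp (-t/4) ≥ Real.exp (-(1/2)) := by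
      apply Real.exp_le_exp.mpr; linarith
    have h2 : Real.exp (-(1/2:ℝ)) = (Real.exp (1/2))⁻¹ := by rw [Real.exp_neg]
    have h3 : (Real.exp (1/2:ℝ))⁻¹ ≥ (1.65:ℝ)⁻¹ := by
      apply inv_anti₀ (Real.exp_pos _) exp_half_lt.le
    rw [h2] at h1
    calc (1/1.65 : ℝ) = (1.65:ℝ)⁻¹ := by norm_num
      _ ≤ (Real.exp (1/2))⁻¹ := h3
      _ ≤ Real.exp (-t/4) := h1
  have hE : (2/3 : ℝ) ≤ Efun t := by
    unfold Efun
    calc (2/3:ℝ) ≤ 1.22 * (1/1.65) := by norm_num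
      _ ≤ Real.sqrt t * Real.exp (-t/4) := by
          apply mul_le_mul hst hexp (by norm_num) (Real.sqrt_nonneg t)
  rw [epsF_eq (by linarith)]
  linarith

/-- For `x ≥ 55`, `√(log x) ≥ 2`. -/
lemma sqrt_log_ge_two {x : ℝ} (hx : 55 ≤ x) : 2 ≤ Real.sqrt (Real.log x) := by
  have hx0 : (0:ℝ) < x := by linarith
  have h4 : (4:ℝ) ≤ Real.log x := by
    rw [Real.le_log_iff_exp_le hx0]
    linarith [exp_four_lt]
  rw [show (2:ℝ) = Real.sqrt (2^2) from (Real.sqrt_sq (by norm_num)).symm]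
  apply Real.sqrt_le_sqrt; norm_num; linarith

/-- For `x ≥ 55`, `x · ε(x) ≥ 1/4`. -/
lemma quarter_le_mul_epsF {x : ℝ} (hx : 55 ≤ x) : 1/4 ≤ x * epsF x := by
  have hx0 : (0:ℝ) < x := by linarith
  set t := Real.sqrt (Real.log x) with ht
  have ht2 : 2 ≤ t := sqrt_log_ge_two hx
  have hlog : t^2 = Real.log x := Real.sq_sqrt (Real.log_nonneg (by linarith))
  have hxe : x = Real.exp (t^2) := by rw [hlog, Real.exp_log hx0]
  rw [epsF_eq (by linarith), ← ht]
  have h1 : (1:ℝ) ≤ Real.sqrt t := by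
    rw [show (1:ℝ) = Real.sqrt 1 from Real.sqrt_one.symm]
    apply Real.sqrt_le_sqrt; linarith
  have h2 : (1:ℝ) ≤ Real.exp (t^2) * Real.exp (-t/4) := by
    rw [← Real.exp_add]
    rw [show (1:ℝ) = Real.exp 0 from Real.exp_zero.symm]
    apply Real.exp_le_exp.mpr
    nlinarith
  have h3 : x * (Efun t / 4) = (Real.exp (t^2) * Real.exp (-t/4)) * Real.sqrt t / 4 := by
    rw [hxe]; unfold Efun; ring
  rw [h3]
  nlinarith [Real.sqrt_nonneg t, Real.exp_pos (t^2), Real.exp_pos (-t/4)]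

lemma nth_prime_prime (k : ℕ) : (Nat.nth Nat.Prime k).Prime :=
  Nat.nth_mem_of_infinite Nat.infinite_setOf_prime k

lemma nth_prime_succ_le {k r : ℕ} (hr : r.Prime) (h : Nat.nth Nat.Prime k < r) :
    Nat.nth Nat.Prime (k + 1) ≤ r := by
  have h1 : Nat.count Nat.Prime (Nat.nth Nat.Prime k) = k :=
    Nat.count_nth_of_infinite Nat.infinite_setOf_prime k
  have h2 : k + 1 ≤ Nat.count Nat.Prime r := by
    calc k + 1 = Nat.count Nat.Prime (Nat.nth Nat.Prime k + 1) := by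
          rw [Nat.count_succ, h1, if_pos (nth_prime_prime k)]
      _ ≤ Nat.count Nat.Prime r := Nat.count_monotone _ h
  calc Nat.nth Nat.Prime (k+1) ≤ Nat.nth Nat.Prime (Nat.count Nat.Prime r) :=
        (Nat.nth_le_nth Nat.infinite_setOf_prime).mpr h2
    _ = r := Nat.nth_count hr

lemma nth_prime_lt_succ (k : ℕ) : Nat.nth Nat.Prime k < Nat.nth Nat.Prime (k + 1) :=
  (Nat.nth_lt_nth Nat.infinite_setOf_prime).mpr k.lt_succ_self

lemma theta_const {p q : ℕ} (hpq : ∀ r : ℕ, r.Prime → p < r → q ≤ r)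
    {x : ℝ} (hx1 : (p:ℝ) ≤ x) (hx2 : x < q) : chebyshevθ x = chebyshevθ (p:ℝ) := by
  unfold chebyshevθ
  rw [Nat.floor_natCast]
  congr 1
  ext r
  simp only [Finset.mem_filter, Finset.mem_range, Nat.lt_succ_iff]
  constructor
  · rintro ⟨hrx, hr⟩
    refine ⟨?_, hr⟩
    by_contra hle
    push_neg at hle
    have hq : q ≤ r := hpq r hr hle
    have h1 : (r:ℝ) ≤ x := (Nat.le_floor_iff (le_trans (Nat.cast_nonneg p) hx1)).mp hrx
    have h2 : (q:ℝ) ≤ x := le_trans (by exact_mod_cast Nat.cast_le.mpr hq) h1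
    linarith
  · rintro ⟨hrp, hr⟩
    refine ⟨?_, hr⟩
    apply Nat.le_floor
    calc (r:ℝ) ≤ (p:ℝ) := by exact_mod_cast hrp
      _ ≤ x := hx1

lemma small_gap {p q : ℕ} (hp : p.Prime) (h11 : 11 ≤ p) (h53 : p ≤ 53)
    (hnext : ∀ r : ℕ, r.Prime → p < r → q ≤ r) : 5 * q < 7 * p := by
  interval_cases p
  · have h := hnext 13 (by norm_num) (by norm_num); omega
  · have h := hnext 13 (by norm_num) (by norm_num); omega
  · have h := hnext 17 (by norm_num) (by norm_num); omega
  · have h := hnext 17 (by norm_num) (by norm_num); omega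
  · have h := hnext 17 (by norm_num) (by norm_num); omega
  · have h := hnext 17 (by norm_num) (by norm_num); omega
  · have h := hnext 19 (by norm_num) (by norm_num); omega
  · have h := hnext 19 (by norm_num) (by norm_num); omega
  · have h := hnext 23 (by norm_num) (by norm_num); omega
  · have h := hnext 23 (by norm_num) (by norm_num); omega
  · have h := hnext 23 (by norm_num) (by norm_num); omega
  · have h := hnext 23 (by norm_num) (by norm_num); omega
  · have h := hnext 29 (by norm_num) (by norm_num); omega
  · have h := hnext 29 (by norm_num) (by norm_num); omega
  · have h := hnext 29 (by norm_num) (by norm_num); omega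
  · have h := hnext 29 (by norm_num) (by norm_num); omega
  · have h := hnext 29 (by norm_num) (by norm_num); omega
  · have h := hnext 29 (by norm_num) (by norm_num); omega
  · have h := hnext 31 (by norm_num) (by norm_num); omega
  · have h := hnext 31 (by norm_num) (by norm_num); omega
  · have h := hnext 37 (by norm_num) (by norm_num); omega
  · have h := hnext 37 (by norm_num) (by norm_num); omega
  · have h := hnext 37 (by norm_num) (by norm_num); omega
  · have h := hnext 37 (by norm_num) (by norm_num); omega
  · have h := hnext 37 (by norm_num) (by norm_num); omega
  · have h := hnext 37 (by norm_num) (by norm_num); omega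
  · have h := hnext 41 (by norm_num) (by norm_num); omega
  · have h := hnext 41 (by norm_num) (by norm_num); omega
  · have h := hnext 41 (by norm_num) (by norm_num); omega
  · have h := hnext 41 (by norm_num) (by norm_num); omega
  · have h := hnext 43 (by norm_num) (by norm_num); omega
  · have h := hnext 43 (by norm_num) (by norm_num); omega
  · have h := hnext 47 (by norm_num) (by norm_num); omega
  · have h := hnext 47 (by norm_num) (by norm_num); omega
  · have h := hnext 47 (by norm_num) (by norm_num); omega
  · have h := hnext 47 (by norm_num) (by norm_num); omega
  · have h := hnext 53 (by norm_num) (by norm_num); omega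
  · have h := hnext 53 (by norm_num) (by norm_num); omega
  · have h := hnext 53 (by norm_num) (by norm_num); omega
  · have h := hnext 53 (by norm_num) (by norm_num); omega
  · have h := hnext 53 (by norm_num) (by norm_num); omega
  · have h := hnext 53 (by norm_num) (by norm_num); omega
  · have h := hnext 59 (by norm_num) (by norm_num); omega

end Aux


lemma main_core
    (hθ : ∀ x : ℝ, 31 ≤ x → |chebyshevθ x - x| <
      (1 / 4) * x * Real.log x ^ ((1 : ℝ) / 4) *
        Real.exp (-Real.sqrt (Real.log x) / 4))
    (p q : ℕ) (hp : p.Prime) (hpq : p < q)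
    (hnext : ∀ r : ℕ, r.Prime → p < r → q ≤ r)
    (h11 : (11:ℝ) ≤ (p:ℝ)) :
    ((q:ℝ) - (p:ℝ)) / (p:ℝ) < 2 * epsF (p:ℝ) / (1 - epsF (p:ℝ)) := by
  set P : ℝ := (p:ℝ) with hP
  set Q : ℝ := (q:ℝ) with hQ
  have hP0 : (0:ℝ) < P := by linarith
  have hPQ : P < Q := by rw [hP, hQ]; exact_mod_cast hpq
  set ε : ℝ := epsF P with hε
  have hε14 : ε ≤ 1/4 := epsF_le_quarter (by linarith)
  have hε0 : 0 < ε := epsF_pos (by linarith)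
  have hden : 0 < 1 - ε := by linarith
  -- key inequality
  have hkey : Q * (1 - ε) < P * (1 + ε) := by
    by_cases h55 : (55:ℝ) ≤ P
    · -- main case
      by_contra hcon
      push_neg at hcon
      set y : ℝ := P * (1 + ε) / (1 - ε) with hy
      have hyQ : y ≤ Q := by
        rw [hy, div_le_iff₀ hden]; linarith
      have hPε : 1/4 ≤ P * ε := quarter_le_mul_epsF h55
      have hyP : P + 1/2 ≤ y := by
        rw [hy, le_div_iff₀ hden]; nlinarith
      have h31P : (31:ℝ) ≤ P := by linarith
      have hθP := hθ P h31P
      have hPεeq : (1:ℝ)/4 * P * Real.log P ^ ((1:ℝ)/4) *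
          Real.exp (-Real.sqrt (Real.log P)/4) = P * ε := by
        rw [hε]; unfold epsF; ring
      rw [hPεeq, abs_lt] at hθP
      set c : ℝ := P * (1 + ε) - chebyshevθ P with hc
      have hc0 : 0 < c := by rw [hc]; nlinarith [hθP.2]
      set δ : ℝ := min (1/2) (c/2) with hδ
      have hδ0 : 0 < δ := lt_min (by norm_num) (by linarith)
      have hδc : δ ≤ c/2 := min_le_right _ _
      have hδh : δ ≤ 1/2 := min_le_left _ _
      set x : ℝ := y - δ with hx
      have hxP : P ≤ x := by rw [hx]; linarith
      have hxQ : x < Q := by rw [hx]; linarith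
      have hθeq : chebyshevθ x = chebyshevθ P := theta_const hnext hxP hxQ
      have h31x : (31:ℝ) ≤ x := by linarith
      have hθx := hθ x h31x
      have hxεeq : (1:ℝ)/4 * x * Real.log x ^ ((1:ℝ)/4) *
          Real.exp (-Real.sqrt (Real.log x)/4) = x * epsF x := by
        unfold epsF; ring
      rw [hxεeq, abs_lt] at hθx
      -- ε is antitone beyond 55
      have hεx : epsF x ≤ ε := by
        rw [hε, epsF_eq (by linarith : (1:ℝ) ≤ x), epsF_eq (by linarith : (1:ℝ) ≤ P)]
        have ha2 : 2 ≤ Real.sqrt (Real.log P) := sqrt_log_ge_two h55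
        have hab : Real.sqrt (Real.log P) ≤ Real.sqrt (Real.log x) :=
          Real.sqrt_le_sqrt (Real.log_le_log hP0 hxP)
        linarith [Efun_anti ha2 hab]
      have hx0 : 0 < x := by linarith
      have hxε : x * epsF x ≤ x * ε := mul_le_mul_of_nonneg_left hεx hx0.le
      -- θ(x) > x - x·ε
      have h1 : x - x * ε < chebyshevθ P := by
        rw [← hθeq]; linarith [hθx.1, hxε]
      have h1' : y - δ - (y * ε - δ * ε) < chebyshevθ P := by
        have hxe2 : x * ε = y * ε - δ * ε := by rw [hx]; ring
        have hxe3 : x = y - δ := hx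
        linarith [h1]
      -- but θ(P) = P(1+ε) - c and y(1-ε) = P(1+ε)
      have hyc : y * (1 - ε) = P * (1 + ε) := by
        rw [hy, div_mul_cancel₀]; exact hden.ne'
      have hyc2 : y - y * ε = P + P * ε := by linear_combination hyc
      have hc2 : c = P + P * ε - chebyshevθ P := by rw [hc]; ring
      have hδε : 0 ≤ δ * ε := mul_nonneg hδ0.le hε0.le
      linarith [h1', hyc2, hc2, hδc, hc0, hδε]
    · -- small case: 11 ≤ p ≤ 53
      push_neg at h55
      have hp54 : p ≤ 54 := by
        by_contra h
        push_neg at h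
        have : (55:ℝ) ≤ P := by rw [hP]; exact_mod_cast h
        linarith
      have hp53 : p ≤ 53 := by
        rcases Nat.lt_or_ge p 54 with h | h
        · omega
        · have : p = 54 := by omega
          rw [this] at hp
          exact absurd hp (by decide)
      have hp11 : 11 ≤ p := by
        by_contra h
        push_neg at h
        have : P ≤ 10 := by
          rw [hP]
          exact_mod_cast Nat.cast_le.mpr (by omega : p ≤ 10)
        linarith
      have hgap5 : 5 * q < 7 * p := small_gap hp hp11 hp53 hnext
      have hQP : 5 * Q < 7 * P := by
        rw [hP, hQ]; exact_mod_cast hgap5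
      have hε16 : 1/6 ≤ ε := by
        rw [hε]
        apply epsF_lb h11
        rw [hP]; exact_mod_cast hp53
      nlinarith
  rw [div_lt_div_iff₀ hP0 hden]
  nlinarith

theorem primeGap_relaxed_schoenfeld
    (hθ : ∀ x : ℝ, 31 ≤ x → |chebyshevθ x - x| <
      (1 / 4) * x * Real.log x ^ ((1 : ℝ) / 4) *
        Real.exp (-Real.sqrt (Real.log x) / 4)) :
    ∀ n : ℕ, 1 ≤ n → 11 ≤ (nthPrime n : ℝ) →
      primeGap n / (nthPrime n : ℝ) <
        (1 / 2) * Real.log (nthPrime n) ^ ((1 : ℝ) / 4) *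
            Real.exp (-Real.sqrt (Real.log (nthPrime n)) / 4) /
          (1 - (1 / 4) * Real.log (nthPrime n) ^ ((1 : ℝ) / 4) *
            Real.exp (-Real.sqrt (Real.log (nthPrime n)) / 4)) := by
  intro n hn h11
  obtain ⟨k, rfl⟩ := Nat.exists_eq_add_of_le hn
  have hnp : nthPrime (1 + k) = Nat.nth Nat.Prime k := by
    unfold nthPrime; congr 1; omega
  have hnq : nthPrime (1 + k + 1) = Nat.nth Nat.Prime (k + 1) := by
    unfold nthPrime; congr 1; omega
  have hgap : primeGap (1 + k)
      = ((Nat.nth Nat.Prime (k+1) : ℝ) - (Nat.nth Nat.Prime k : ℝ)) := by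
    unfold primeGap; rw [hnp, hnq]
  rw [hnp] at h11 ⊢
  rw [hgap]
  have hcore := main_core hθ (Nat.nth Nat.Prime k) (Nat.nth Nat.Prime (k+1))
    (nth_prime_prime k) (nth_prime_lt_succ k)
    (fun r hr h => nth_prime_succ_le hr h) h11
  have hnum_eq : (1:ℝ)/2 * Real.log (Nat.nth Nat.Prime k : ℝ) ^ ((1:ℝ)/4) *
      Real.exp (-Real.sqrt (Real.log (Nat.nth Nat.Prime k : ℝ))/4)
      = 2 * epsF (Nat.nth Nat.Prime k : ℝ) := by unfold epsF; ring
  have hden_eq : (1:ℝ) - 1/4 * Real.log (Nat.nth Nat.Prime k : ℝ) ^ ((1:ℝ)/4) *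
      Real.exp (-Real.sqrt (Real.log (Nat.nth Nat.Prime k : ℝ))/4)
      = 1 - epsF (Nat.nth Nat.Prime k : ℝ) := by unfold epsF; ring
  rw [hnum_eq, hden_eq]
  exact hcore
end

section
/- Let θ(x) = ∑_{p prime, p ≤ x} log p, p_n the n-th prime, and g_n = p_{n+1} − p_n. Suppose (Trudgian's bound) that |θ(x) − x| < 0.2428127763 · x (log x)^{1/4} exp(−0.3935970880 √(log x)) for all x ≥ 149. Then for every n with p_n ≥ 11 one has g_n / p_n < 2 · 0.2428127763 (log p_n)^{1/4} exp(−0.3935970880 √(log p_n)) / (1 − 0.2428127763 (log p_n)^{1/4} exp(−0.3935970880 √(log p_n))). -/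
open Real Set

/-!
Write `ε(x) = 0.2428127763 (log x)^{1/4} exp(-0.3935970880 √(log x))`, so that the hypothesis
reads `|θ(x) - x| < x ε(x)`, and let `p < q` be consecutive primes. Since `θ` is constant on
`[p, q)`, for `x` just below `q` the lower bound gives `θ(p) = θ(x) > x (1 - ε(x)) ≥ x (1 - ε(p))`,
hence `q (1 - ε(p)) ≤ θ(p) < p (1 + ε(p))`, which rearranges to the claim. This uses that `ε` is
decreasing for `x ≥ 11`: with `s = √(log x)` it is a multiple of `√s e^{-bs}`, which decreases
for `s ≥ 1/(2b)`. For `11 ≤ p < 149` one has `ε(p) ≥ ε(149) > 0.14`, and the prime gaps there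
are checked directly.
-/

lemma sqrt_mul_exp_neg_mul_le {b s : ℝ} (hb : 0 < b) (hs : 0 ≤ s) :
    √s * exp (-(b * s)) ≤ 1 / (2 * √b) := by
  have hamgm : 2 * √b * √s ≤ exp (b * s) := by
    have : 2 * √b * √s ≤ 1 + b * s := by
      nlinarith [sq_nonneg (√b * √s - 1), sq_sqrt hb.le, sq_sqrt hs]
    linarith [add_one_le_exp (b * s)]
  rw [exp_neg, le_div_iff₀ (by positivity)]
  calc √s * (exp (b * s))⁻¹ * (2 * √b) = 2 * √b * √s / exp (b * s) := by ring
    _ ≤ 1 := div_le_one_of_le₀ hamgm (exp_pos _).le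

lemma antitoneOn_sqrt_mul_exp_neg_mul {b : ℝ} (hb : 0 < b) :
    AntitoneOn (fun s => √s * exp (-(b * s))) (Ici (1 / (2 * b))) := by
  intro s hs s' _ hss'
  simp only [mem_Ici] at hs
  have hbs : 1 ≤ 2 * b * s := by rwa [div_le_iff₀' (by positivity)] at hs
  have hs0 : 0 ≤ s := by nlinarith
  have hsq : s' ≤ s * exp (2 * b * (s' - s)) := by
    nlinarith [add_one_le_exp (2 * b * (s' - s))]
  have hsqrt : √s' ≤ √s * exp (b * (s' - s)) := by
    calc √s' ≤ √(s * exp (2 * b * (s' - s))) := sqrt_le_sqrt hsq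
      _ = √s * exp (b * (s' - s)) := by
        rw [sqrt_mul hs0, show 2 * b * (s' - s) = b * (s' - s) + b * (s' - s) by ring, exp_add,
          sqrt_mul_self (exp_pos _).le]
  calc √s' * exp (-(b * s')) ≤ √s * exp (b * (s' - s)) * exp (-(b * s')) := by gcongr
    _ = √s * exp (-(b * s)) := by rw [mul_assoc, ← exp_add]; ring_nf

noncomputable def trudgianEps (x : ℝ) : ℝ :=
  0.2428127763 * log x ^ ((1 : ℝ) / 4) * exp (-0.3935970880 * √(log x))

lemma trudgianEps_eq_sqrt_sqrt_log {x : ℝ} (hx : 1 ≤ x) :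
    trudgianEps x = 0.2428127763 * (√(√(log x)) * exp (-(0.3935970880 * √(log x)))) := by
  have hlog : 0 ≤ log x := log_nonneg hx
  rw [trudgianEps, sqrt_eq_rpow, sqrt_eq_rpow, ← rpow_mul hlog]
  norm_num [mul_assoc]

lemma trudgianEps_lt_one {x : ℝ} (hx : 1 ≤ x) : trudgianEps x < 1 := by
  have hb : (0.6 : ℝ) ≤ √0.3935970880 := le_sqrt_of_sq_le (by norm_num)
  have hbound := sqrt_mul_exp_neg_mul_le (b := 0.3935970880) (by norm_num) (sqrt_nonneg (log x))
  rw [trudgianEps_eq_sqrt_sqrt_log hx]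
  calc _ ≤ 0.2428127763 * (1 / (2 * √0.3935970880)) := by gcongr
    _ < 1 := by rw [mul_one_div, div_lt_one (by positivity)]; linarith

lemma exp_two_lt_eleven : exp 2 < 11 := by
  have := exp_one_lt_d9
  rw [show (2 : ℝ) = 1 + 1 by norm_num, exp_add]
  nlinarith [exp_pos 1]

lemma one_div_two_mul_le_sqrt_log {x : ℝ} (hx : 11 ≤ x) : 1 / (2 * 0.3935970880) ≤ √(log x) := by
  have hlog : 2 ≤ log x := by
    rw [le_log_iff_exp_le (by linarith)]; linarith [exp_two_lt_eleven]
  exact le_sqrt_of_sq_le (by norm_num; linarith)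

lemma trudgianEps_antitoneOn : AntitoneOn trudgianEps (Ici 11) := by
  intro x hx y hy hxy
  simp only [mem_Ici] at hx hy
  have hsqrt_log : √(log x) ≤ √(log y) := sqrt_le_sqrt (log_le_log (by linarith) hxy)
  rw [trudgianEps_eq_sqrt_sqrt_log (by linarith), trudgianEps_eq_sqrt_sqrt_log (by linarith)]
  gcongr 0.2428127763 * ?_
  exact antitoneOn_sqrt_mul_exp_neg_mul (by norm_num) (one_div_two_mul_le_sqrt_log hx)
    (one_div_two_mul_le_sqrt_log hy) hsqrt_log

lemma log_149_le : log 149 ≤ 5.0625 := by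
  rw [log_le_iff_le_exp (by norm_num), show (5.0625 : ℝ) = 5 + 0.0625 by norm_num, exp_add]
  have he := exp_one_gt_d9
  calc (149 : ℝ) ≤ 2.7182818283 ^ 5 * (0.0625 + 1) := by norm_num
    _ ≤ exp 1 ^ 5 * exp 0.0625 := by gcongr; exact add_one_le_exp _
    _ = exp 5 * exp 0.0625 := by rw [← exp_nat_mul]; norm_num

lemma le_trudgianEps_149 : 0.14 ≤ trudgianEps 149 := by
  have hs : √(log 149) ≤ 2.25 := sqrt_le_iff.mpr ⟨by norm_num, by norm_num; linarith [log_149_le]⟩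
  have hthreshold := one_div_two_mul_le_sqrt_log (x := 149) (by norm_num)
  have hmono := antitoneOn_sqrt_mul_exp_neg_mul (b := 0.3935970880) (by norm_num) hthreshold
    (hthreshold.trans hs) hs
  have hexp : 1.1 / 2.7182818286 ≤ exp (-(0.3935970880 * 2.25)) := by
    have he := exp_one_lt_d9
    calc 1.1 / 2.7182818286 ≤ (0.1 + 1) / exp 1 := by gcongr; norm_num
      _ ≤ exp 0.1 / exp 1 := by gcongr; exact add_one_le_exp _
      _ = exp (-0.9) := by rw [← exp_sub]; norm_num
      _ ≤ exp (-(0.3935970880 * 2.25)) := by gcongr; norm_num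
  have hsqrt : (1.5 : ℝ) = √2.25 := by
    rw [show (2.25 : ℝ) = 1.5 ^ 2 by norm_num, sqrt_sq (by norm_num)]
  rw [trudgianEps_eq_sqrt_sqrt_log (by norm_num)]
  calc (0.14 : ℝ) ≤ 0.2428127763 * (1.5 * (1.1 / 2.7182818286)) := by norm_num
    _ ≤ 0.2428127763 * (√2.25 * exp (-(0.3935970880 * 2.25))) := by rw [← hsqrt]; gcongr
    _ ≤ _ := mul_le_mul_of_nonneg_left hmono (by norm_num)

lemma chebyshevθ_eq_of_forall_prime_lt {p : ℕ} {x : ℝ} (hpx : (p : ℝ) ≤ x)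
    (hgap : ∀ r : ℕ, r.Prime → p < r → x < r) : chebyshevθ x = chebyshevθ p := by
  unfold chebyshevθ
  rw [Nat.floor_natCast]
  congr 1
  ext r
  simp only [Finset.mem_filter, Finset.mem_range, Nat.lt_succ_iff, and_congr_left_iff]
  intro hr
  have hx0 : 0 ≤ x := (Nat.cast_nonneg p).trans hpx
  constructor
  · intro hrx
    by_contra! hpr
    exact (hgap r hr hpr).not_ge ((Nat.cast_le.mpr hrx).trans (Nat.floor_le hx0))
  · intro hrp
    exact hrp.trans (Nat.le_floor hpx)

lemma nthPrime_succ_le {n r : ℕ} (hr : r.Prime) (h : nthPrime n < r) : nthPrime (n + 1) ≤ r := by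
  unfold nthPrime at *
  rcases n with _ | n
  · exact h.le
  · by_contra! hlt
    exact h.not_ge (Nat.le_nth_of_lt_nth_succ hlt hr)

lemma sub_div_lt_two_mul_div_one_sub {p q θ ε : ℝ} (hp : 0 < p) (hε : ε < 1)
    (hθ : θ < p * (1 + ε)) (hq : q * (1 - ε) ≤ θ) : (q - p) / p < 2 * ε / (1 - ε) := by
  rw [div_lt_div_iff₀ hp (by linarith)]
  nlinarith

lemma sub_div_lt_of_abs_chebyshevθ_sub_lt {ε : ℝ → ℝ} {p q : ℕ} (hp : 0 < p)
    (hq : ∀ r : ℕ, r.Prime → p < r → q ≤ r)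
    (hθ : ∀ x : ℝ, p ≤ x → |chebyshevθ x - x| < x * ε x)
    (hε : AntitoneOn ε (Ici (p : ℝ))) (hε1 : ε p < 1) :
    ((q : ℝ) - p) / p < 2 * ε p / (1 - ε p) := by
  have hp' : (0 : ℝ) < p := by exact_mod_cast hp
  have hθp := abs_lt.mp (hθ p le_rfl)
  refine sub_div_lt_two_mul_div_one_sub hp' hε1 (by linarith) ?_
  by_contra! hlt
  have hpos : 0 < 1 - ε p := by linarith
  set x := chebyshevθ p / (1 - ε p)
  have hxε : x * (1 - ε p) = chebyshevθ p := div_mul_cancel₀ _ hpos.ne'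
  have hpx : (p : ℝ) < x := by rw [lt_div_iff₀ hpos]; linarith
  have hxq : x < q := by rw [div_lt_iff₀ hpos]; linarith
  have hθx : chebyshevθ x = chebyshevθ p :=
    chebyshevθ_eq_of_forall_prime_lt hpx.le fun r hr hpr =>
      hxq.trans_le (by exact_mod_cast hq r hr hpr)
  have hεx : ε x ≤ ε p := hε self_mem_Ici hpx.le hpx.le
  have := (abs_lt.mp (hθ x hpx.le)).1
  nlinarith

-- `57 / 43 = 1 + 2ε / (1 - ε)` at `ε = 0.14`, a lower bound for `trudgianEps` on `[11, 149]`.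
set_option maxRecDepth 100000 in
lemma exists_prime_gt_lt_mul_of_lt_149 :
    ∀ p < 149, 11 ≤ p → ∃ r < 200, p < r ∧ 43 * r < 57 * p ∧ r.Prime := by
  decide

lemma primeGap_div_lt_of_lt_149 {n : ℕ} {ε : ℝ} (h11 : 11 ≤ nthPrime n) (h149 : nthPrime n < 149)
    (hε0 : 0.14 ≤ ε) (hε1 : ε < 1) : primeGap n / nthPrime n < 2 * ε / (1 - ε) := by
  obtain ⟨r, -, hpr, hr57, hr⟩ := exists_prime_gt_lt_mul_of_lt_149 _ h149 h11
  have hq : (nthPrime (n + 1) : ℝ) ≤ r := by exact_mod_cast nthPrime_succ_le hr hpr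
  have hr57' : 43 * (r : ℝ) < 57 * nthPrime n := by exact_mod_cast hr57
  have hp : (0 : ℝ) < nthPrime n := by positivity
  rw [primeGap, div_lt_div_iff₀ (by linarith) (by linarith)]
  nlinarith

theorem primeGap_trudgian
    (hθ : ∀ x : ℝ, 149 ≤ x → |chebyshevθ x - x| <
      0.2428127763 * x * Real.log x ^ ((1 : ℝ) / 4) *
        Real.exp (-0.3935970880 * Real.sqrt (Real.log x))) :
    ∀ n : ℕ, 1 ≤ n → 11 ≤ (nthPrime n : ℝ) →
      primeGap n / (nthPrime n : ℝ) <
        2 * (0.2428127763 * Real.log (nthPrime n) ^ ((1 : ℝ) / 4) *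
              Real.exp (-0.3935970880 * Real.sqrt (Real.log (nthPrime n)))) /
          (1 - 0.2428127763 * Real.log (nthPrime n) ^ ((1 : ℝ) / 4) *
              Real.exp (-0.3935970880 * Real.sqrt (Real.log (nthPrime n)))) := by
  intro n _ h11
  change primeGap n / nthPrime n < 2 * trudgianEps (nthPrime n) / (1 - trudgianEps (nthPrime n))
  have hε1 := trudgianEps_lt_one (by linarith)
  rcases lt_or_ge (nthPrime n) 149 with hsmall | hbig
  · have hε0 : 0.14 ≤ trudgianEps (nthPrime n) := le_trudgianEps_149.trans <|
      trudgianEps_antitoneOn h11 (by norm_num : (149 : ℝ) ∈ Ici 11) (by exact_mod_cast hsmall.le)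
    exact primeGap_div_lt_of_lt_149 (by exact_mod_cast h11) hsmall hε0 hε1
  · have hbig' : (149 : ℝ) ≤ nthPrime n := by exact_mod_cast hbig
    have hθ' : ∀ x : ℝ, nthPrime n ≤ x → |chebyshevθ x - x| < x * trudgianEps x :=
      fun x hx => (hθ x (hbig'.trans hx)).trans_eq (by rw [trudgianEps]; ring)
    exact sub_div_lt_of_abs_chebyshevθ_sub_lt (by omega) (fun r hr => nthPrime_succ_le hr) hθ'
      (trudgianEps_antitoneOn.mono (Ici_subset_Ici.mpr h11)) hε1
end

section
/- Let θ(x) = ∑_{p prime, p ≤ x} log p, p_n the n-th prime, and g_n = p_{n+1} − p_n. Suppose that |θ(x) − x| < x exp(−√(log x)/4) for all x ≥ 2. Then for every n ≥ 1 one has g_n / p_n < 2 exp(−√(log p_n)/4) / (1 − exp(−√(log p_n)/4)). -/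
theorem primeGap_one_quarter
    (hθ : ∀ x : ℝ, 2 ≤ x → |chebyshevθ x - x| <
      x * Real.exp (-Real.sqrt (Real.log x) / 4)) :
    ∀ n : ℕ, 1 ≤ n →
      primeGap n / (nthPrime n : ℝ) <
        2 * Real.exp (-Real.sqrt (Real.log (nthPrime n)) / 4) /
          (1 - Real.exp (-Real.sqrt (Real.log (nthPrime n)) / 4)) := by
  intro n hn
  have hinf : (setOf Nat.Prime).Infinite := Nat.infinite_setOf_prime
  have hPn : nthPrime n = Nat.nth Nat.Prime (n - 1) := rfl
  have hQn : nthPrime (n + 1) = Nat.nth Nat.Prime n := rfl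
  set P := nthPrime n with hPdef
  set Q := Nat.nth Nat.Prime n with hQdef
  have hPp : P.Prime := by rw [hPn]; exact Nat.prime_nth_prime _
  have hQp : Q.Prime := Nat.prime_nth_prime _
  have hPQ : P < Q := by
    have h := (Nat.nth_lt_nth hinf (k := n - 1) (n := n)).mpr (by omega)
    rw [← hPn, ← hQdef] at h
    exact h
  have hP2 : 2 ≤ P := hPp.two_le
  have hQ3 : 3 ≤ Q := by omega
  -- no primes strictly between P and Q
  have hbetween : ∀ r : ℕ, r.Prime → r < Q → r ≤ P := by
    intro r hr hrQ
    by_contra h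
    push_neg at h
    have hcount : Nat.nth Nat.Prime (Nat.count Nat.Prime r) = r := Nat.nth_count hr
    have h1 : n - 1 < Nat.count Nat.Prime r := by
      apply (Nat.nth_lt_nth hinf).mp
      rw [hcount]; rw [hPn] at h; exact h
    have h2 : Q ≤ r := by
      rw [hQdef, ← hcount]
      exact (Nat.nth_le_nth hinf).mpr (by omega)
    omega
  have hsets : Finset.filter Nat.Prime (Finset.range Q) =
      Finset.filter Nat.Prime (Finset.range (P + 1)) := by
    ext r
    simp only [Finset.mem_filter, Finset.mem_range]
    constructor
    · rintro ⟨hrQ, hr⟩; exact ⟨by have := hbetween r hr hrQ; omega, hr⟩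
    · rintro ⟨hrP, hr⟩; exact ⟨by omega, hr⟩
  set ε := Real.exp (-Real.sqrt (Real.log (P : ℝ)) / 4) with hεdef
  have hεpos : 0 < ε := Real.exp_pos _
  have hε1 : ε < 1 := by
    rw [hεdef]
    rw [Real.exp_lt_one_iff]
    have hlog : 0 < Real.log (P : ℝ) := Real.log_pos (by exact_mod_cast by omega)
    have := Real.sqrt_pos.mpr hlog
    linarith
  have hP2' : (2 : ℝ) ≤ (P : ℝ) := by exact_mod_cast hP2
  have hPpos : (0 : ℝ) < (P : ℝ) := by linarith
  have h2 : |chebyshevθ (P : ℝ) - (P : ℝ)| < (P : ℝ) * ε := hθ (P : ℝ) hP2'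
  have h2' := abs_lt.mp h2
  set δ : ℝ := (P : ℝ) * ε - (chebyshevθ (P : ℝ) - (P : ℝ)) with hδdef
  have hδpos : 0 < δ := by rw [hδdef]; linarith [h2'.2]
  set t : ℝ := min δ (1 / 2) with htdef
  have ht0 : 0 < t := lt_min hδpos (by norm_num)
  have ht2 : t ≤ 1 / 2 := min_le_right _ _
  have htδ : t ≤ δ := min_le_left _ _
  set x : ℝ := (Q : ℝ) - t with hxdef
  have hQ3' : (3 : ℝ) ≤ (Q : ℝ) := by exact_mod_cast hQ3
  have hx2 : (2 : ℝ) ≤ x := by rw [hxdef]; linarith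
  have hxlt : x < (Q : ℝ) := by rw [hxdef]; linarith
  have hPQ' : (P : ℝ) + 1 ≤ (Q : ℝ) := by exact_mod_cast hPQ
  have hPx : (P : ℝ) ≤ x := by rw [hxdef]; linarith
  have hfloor : ⌊x⌋₊ = Q - 1 := by
    rw [Nat.floor_eq_iff (by linarith)]
    have hcast : ((Q - 1 : ℕ) : ℝ) = (Q : ℝ) - 1 := by
      have : 1 ≤ Q := by omega
      push_cast [this]; ring
    rw [hcast]
    constructor <;> [linarith; linarith]
  have hθeq : chebyshevθ x = chebyshevθ (P : ℝ) := by
    unfold chebyshevθ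
    rw [hfloor, Nat.floor_natCast]
    have hq1 : Q - 1 + 1 = Q := by omega
    rw [hq1, hsets]
  have h1 : |chebyshevθ x - x| < x * Real.exp (-Real.sqrt (Real.log x) / 4) :=
    hθ x hx2
  have hεx : Real.exp (-Real.sqrt (Real.log x) / 4) ≤ ε := by
    rw [hεdef]
    apply Real.exp_le_exp.mpr
    have hlog : Real.log (P : ℝ) ≤ Real.log x := Real.log_le_log hPpos hPx
    have hs : Real.sqrt (Real.log (P : ℝ)) ≤ Real.sqrt (Real.log x) :=
      Real.sqrt_le_sqrt hlog
    linarith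
  have hA : x - chebyshevθ x < x * Real.exp (-Real.sqrt (Real.log x) / 4) := by
    linarith [(abs_lt.mp h1).1]
  have hxε : x * Real.exp (-Real.sqrt (Real.log x) / 4) ≤ x * ε :=
    mul_le_mul_of_nonneg_left hεx (by linarith)
  have hxQε : x * ε ≤ (Q : ℝ) * ε := mul_le_mul_of_nonneg_right hxlt.le hεpos.le
  clear_value t x
  -- main inequality: Q - P < Q ε + P ε
  have hmain : (Q : ℝ) - (P : ℝ) < (Q : ℝ) * ε + (P : ℝ) * ε := by
    have hθP : chebyshevθ (P : ℝ) = (P : ℝ) + (P : ℝ) * ε - δ := by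
      rw [hδdef]; ring
    rw [hθeq, hθP] at hA
    have hQx : (Q : ℝ) = x + t := by rw [hxdef]; ring
    linarith [hA, hxε, hxQε, htδ, hQx]
  have hgap : primeGap n = (Q : ℝ) - (P : ℝ) := by
    unfold primeGap
    rw [hQn]
  rw [hgap, div_lt_div_iff₀ hPpos (by linarith)]
  nlinarith [hmain]
end

section
/- Let θ(x) = ∑_{p prime, p ≤ x} log p, p_n the n-th prime, and g_n = p_{n+1} − p_n. Suppose that |θ(x) − x| < 295 x exp(−√(log x)/2) for all x ≥ 2. Then for every n ≥ 1 one has g_n / p_n < 885 exp(−√(log p_n)/2). -/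
private lemma E_anti {a b : ℝ} (ha : 0 < a) (hab : a ≤ b) :
    Real.exp (-Real.sqrt (Real.log b) / 2) ≤ Real.exp (-Real.sqrt (Real.log a) / 2) := by
  apply Real.exp_le_exp.mpr
  have := Real.sqrt_le_sqrt (Real.log_le_log ha hab)
  linarith

theorem primeGap_885
    (hθ : ∀ x : ℝ, 2 ≤ x → |chebyshevθ x - x| <
      295 * x * Real.exp (-Real.sqrt (Real.log x) / 2)) :
    ∀ n : ℕ, 1 ≤ n →
      primeGap n / (nthPrime n : ℝ) <
        885 * Real.exp (-Real.sqrt (Real.log (nthPrime n)) / 2) := by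
  intro n hn
  set k := n - 1 with hk
  have hnk : n = k + 1 := by omega
  set p := Nat.nth Nat.Prime k with hp
  set q := Nat.nth Nat.Prime (k + 1) with hq
  have hinf := Nat.infinite_setOf_prime
  have hpprime : p.Prime := Nat.prime_nth_prime k
  have hqprime : q.Prime := Nat.prime_nth_prime (k + 1)
  have hp2 : 2 ≤ p := hpprime.two_le
  have hpq : p < q := (Nat.nth_lt_nth hinf).mpr (lt_add_one k)
  -- no prime strictly between p and q
  have hbetween : ∀ m : ℕ, m.Prime → m < q → m ≤ p := by
    intro m hm hmq
    have h1 : Nat.nth Nat.Prime (Nat.count Nat.Prime m) = m := Nat.nth_count hm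
    have h2 : Nat.count Nat.Prime m < k + 1 := by
      apply (Nat.nth_lt_nth hinf).mp; rw [h1]; exact hmq
    have h3 : Nat.count Nat.Prime m ≤ k := by omega
    have := (Nat.nth_le_nth hinf).mpr h3
    rwa [h1] at this
  -- Bertrand: q < 2p
  have hq2p : q < 2 * p := by
    obtain ⟨r, hr, hpr, hr2p⟩ := Nat.bertrand p (by omega)
    have hqr : q ≤ r := by
      have h1 : Nat.nth Nat.Prime (Nat.count Nat.Prime r) = r := Nat.nth_count hr
      have h2 : k < Nat.count Nat.Prime r := by
        apply (Nat.nth_lt_nth hinf).mp; rw [h1]; exact hpr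
      have := (Nat.nth_le_nth hinf).mpr (by omega : k + 1 ≤ Nat.count Nat.Prime r)
      rwa [h1] at this
    have hrne : r ≠ 2 * p := by
      intro h
      have heven : Even r := ⟨p, by omega⟩
      have := (Nat.Prime.even_iff hr).mp heven
      omega
    omega
  have hq2p1 : q ≤ 2 * p - 1 := by omega
  -- real setup
  set E : ℝ → ℝ := fun x => Real.exp (-Real.sqrt (Real.log x) / 2) with hE
  have hEp_pos : 0 < E (p : ℝ) := Real.exp_pos _
  set δ : ℝ := min 1 (295 * E (p : ℝ)) with hδ
  have hδpos : 0 < δ := lt_min one_pos (by positivity)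
  have hδ1 : δ ≤ 1 := min_le_left _ _
  have hδE : δ ≤ 295 * E (p : ℝ) := min_le_right _ _
  set x : ℝ := (q : ℝ) - δ with hx
  have hpR : (2 : ℝ) ≤ (p : ℝ) := by exact_mod_cast hp2
  have hpqR : (p : ℝ) + 1 ≤ (q : ℝ) := by exact_mod_cast hpq
  have hxp : (p : ℝ) ≤ x := by simp only [hx]; linarith
  have hx2 : (2 : ℝ) ≤ x := le_trans hpR hxp
  -- floor of x is q - 1
  have hfloor : ⌊x⌋₊ = q - 1 := by
    rw [Nat.floor_eq_iff (by linarith)]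
    have : ((q - 1 : ℕ) : ℝ) = (q : ℝ) - 1 := by
      have : 1 ≤ q := hqprime.one_lt.le
      push_cast [this]; ring
    rw [this]
    constructor <;> simp only [hx] <;> linarith
  -- chebyshevθ x = chebyshevθ p
  have hsame : Finset.filter Nat.Prime (Finset.range (q - 1 + 1)) =
      Finset.filter Nat.Prime (Finset.range (p + 1)) := by
    ext m
    simp only [Finset.mem_filter, Finset.mem_range]
    constructor
    · rintro ⟨hm, hmp⟩
      exact ⟨by have := hbetween m hmp (by omega); omega, hmp⟩
    · rintro ⟨hm, hmp⟩
      exact ⟨by omega, hmp⟩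
  have hθx : chebyshevθ x = chebyshevθ (p : ℝ) := by
    unfold chebyshevθ
    rw [hfloor, Nat.floor_natCast, hsame]
  -- apply the hypothesis at x and at p
  have h1 := hθ x hx2
  have h2 := hθ (p : ℝ) hpR
  rw [hθx] at h1
  set S := chebyshevθ (p : ℝ) with hS
  have h1' : x - S < 295 * x * E x := by
    have := abs_lt.mp h1; simp only [hE]; linarith [this.1]
  have h2' : S - (p : ℝ) < 295 * (p : ℝ) * E (p : ℝ) := by
    have := abs_lt.mp h2; simp only [hE]; linarith [this.1, this.2]
  -- combine
  have hExEp : E x ≤ E (p : ℝ) := E_anti (by linarith) hxp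
  have hxq : x ≤ (2 * p - 1 : ℝ) := by
    have : (q : ℝ) ≤ (2 * p - 1 : ℕ) := by exact_mod_cast hq2p1
    have hle : 1 ≤ 2 * p := by omega
    have h2p1 : ((2 * p - 1 : ℕ) : ℝ) = 2 * (p : ℝ) - 1 := by
      push_cast [hle]; ring
    simp only [hx]; rw [h2p1] at this; linarith
  have hxpos : 0 < x := by linarith
  have hxEx : 295 * x * E x ≤ 295 * (2 * (p : ℝ) - 1) * E (p : ℝ) := by
    have h1 : x * E x ≤ x * E (p : ℝ) :=
      mul_le_mul_of_nonneg_left hExEp hxpos.le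
    have h2 : x * E (p : ℝ) ≤ (2 * (p : ℝ) - 1) * E (p : ℝ) :=
      mul_le_mul_of_nonneg_right (by linarith) hEp_pos.le
    nlinarith
  have hmain : (q : ℝ) - (p : ℝ) < 885 * (p : ℝ) * E (p : ℝ) := by
    have hqx : (q : ℝ) - (p : ℝ) = δ + (x - S) + (S - (p : ℝ)) := by
      simp only [hx]; ring
    nlinarith
  -- conclude
  have hppos : (0 : ℝ) < (p : ℝ) := by linarith
  rw [hnk]
  show primeGap (k + 1) / (nthPrime (k + 1) : ℝ) < 885 * E (nthPrime (k + 1) : ℝ)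
  have hnth1 : nthPrime (k + 1) = p := by simp [nthPrime, hp]
  have hnth2 : nthPrime (k + 1 + 1) = q := by simp [nthPrime, hq]
  rw [primeGap, hnth1, hnth2, div_lt_iff₀ hppos]
  calc (q : ℝ) - (p : ℝ) < 885 * (p : ℝ) * E (p : ℝ) := hmain
    _ = 885 * E (p : ℝ) * (p : ℝ) := by ring
end

section
/- Let θ(x) = ∑_{p prime, p ≤ x} log p, p_n the n-th prime, and g_n = p_{n+1} − p_n. Suppose (Fiori–Kadiri–Swidinsky bound) that |θ(x) − x| < 9.220226 · x (log x)^{3/2} exp(−0.8476836 √(log x)) for all x ≥ 2. Then for every n ≥ 1 one has g_n / p_n < 3 · 9.220226 (log p_n)^{3/2} exp(−0.8476836 √(log p_n)). -/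
lemma FKS_F_anti : AntitoneOn (fun t : ℝ => 3/2 * Real.log t - 0.8476836 * Real.sqrt t) (Set.Ici 13) := by
  have hder : ∀ x : ℝ, x ∈ Set.Ioi (13:ℝ) →
      HasDerivAt (fun t : ℝ => 3/2 * Real.log t - 0.8476836 * Real.sqrt t)
        (3/2 * x⁻¹ - 0.8476836 * (1 / (2 * Real.sqrt x))) x := by
    intro x hx
    have hx0 : x ≠ 0 := by have : (13:ℝ) < x := hx; positivity
    exact ((Real.hasDerivAt_log hx0).const_mul (3/2)).sub
      ((Real.hasDerivAt_sqrt hx0).const_mul 0.8476836)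
  apply antitoneOn_of_deriv_nonpos (convex_Ici 13)
  · apply ContinuousOn.sub
    · exact continuousOn_const.mul (Real.continuousOn_log.mono (by
        intro x hx; simp only [Set.mem_compl_iff, Set.mem_singleton_iff]
        have : (13:ℝ) ≤ x := hx; intro h; linarith))
    · exact continuousOn_const.mul Real.continuous_sqrt.continuousOn
  · rw [interior_Ici]
    intro x hx
    exact (hder x hx).differentiableAt.differentiableWithinAt
  · rw [interior_Ici]
    intro x hx
    rw [(hder x hx).deriv]
    have hx13 : (13:ℝ) < x := hx
    have hs : (3.605:ℝ) ≤ Real.sqrt x := by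
      rw [show (3.605:ℝ) = Real.sqrt (3.605^2) by rw [Real.sqrt_sq]; norm_num]
      exact Real.sqrt_le_sqrt (by nlinarith)
    have hss : Real.sqrt x * Real.sqrt x = x := Real.mul_self_sqrt (by linarith)
    have hspos : (0:ℝ) < Real.sqrt x := by linarith
    rw [sub_nonpos]
    have hxpos : (0:ℝ) < x := by linarith
    rw [show (3:ℝ)/2 * x⁻¹ = 3/(2*x) by field_simp,
        show (0.8476836:ℝ)*(1/(2*Real.sqrt x)) = 0.8476836/(2*Real.sqrt x) by ring]
    rw [div_le_div_iff₀ (by positivity) (by positivity)]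
    nlinarith

lemma FKS_eps_anti (s u : ℝ) (hs : 13 ≤ s) (hsu : s ≤ u) :
    u ^ ((3:ℝ)/2) * Real.exp (-0.8476836 * Real.sqrt u) ≤
      s ^ ((3:ℝ)/2) * Real.exp (-0.8476836 * Real.sqrt s) := by
  have hu : (13:ℝ) ≤ u := hs.trans hsu
  have eq1 : ∀ t : ℝ, 13 ≤ t → t ^ ((3:ℝ)/2) * Real.exp (-0.8476836 * Real.sqrt t)
      = Real.exp (3/2 * Real.log t - 0.8476836 * Real.sqrt t) := by
    intro t ht
    rw [Real.rpow_def_of_pos (by linarith), ← Real.exp_add]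
    ring_nf
  rw [eq1 s hs, eq1 u hu]
  exact Real.exp_le_exp.mpr (FKS_F_anti hs hu hsu)

lemma prime_le_nthPrime {m n : ℕ} (hm : Nat.Prime m) (h : m < nthPrime (n+1)) :
    m ≤ nthPrime n := by
  have hcount := Nat.nth_count (p := Nat.Prime) hm
  unfold nthPrime at h ⊢
  rw [show n + 1 - 1 = n from rfl] at h
  rw [← hcount] at h ⊢
  rw [Nat.nth_lt_nth Nat.infinite_setOf_prime] at h
  exact (Nat.nth_le_nth Nat.infinite_setOf_prime).mpr (by omega)

lemma nthPrime_succ_le_s14 {m n : ℕ} (hm : Nat.Prime m) (h : nthPrime n < m) :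
    nthPrime (n+1) ≤ m := by
  have hcount := Nat.nth_count (p := Nat.Prime) hm
  unfold nthPrime at h ⊢
  rw [show n + 1 - 1 = n from rfl]
  rw [← hcount] at h ⊢
  rw [Nat.nth_lt_nth Nat.infinite_setOf_prime] at h
  exact (Nat.nth_le_nth Nat.infinite_setOf_prime).mpr (by omega)

lemma theta_const_s14 {n : ℕ} {y : ℝ} (h1 : (nthPrime n : ℝ) ≤ y)
    (h2 : y < (nthPrime (n+1) : ℝ)) :
    chebyshevθ y = chebyshevθ (nthPrime n : ℝ) := by
  unfold chebyshevθ
  have hset : Finset.filter Nat.Prime (Finset.range (⌊y⌋₊ + 1)) =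
      Finset.filter Nat.Prime (Finset.range (⌊((nthPrime n : ℕ) : ℝ)⌋₊ + 1)) := by
    rw [Nat.floor_natCast]
    ext m
    simp only [Finset.mem_filter, Finset.mem_range, Nat.lt_succ_iff]
    constructor
    · rintro ⟨hle, hmp⟩
      refine ⟨?_, hmp⟩
      apply prime_le_nthPrime hmp
      have hy0 : (0:ℝ) ≤ y := le_trans (by positivity) h1
      have : (m:ℝ) ≤ y := le_trans (by exact_mod_cast hle : (m:ℝ) ≤ (⌊y⌋₊:ℝ)) (Nat.floor_le hy0)
      exact_mod_cast this.trans_lt h2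
    · rintro ⟨hle, hmp⟩
      refine ⟨?_, hmp⟩
      calc m ≤ nthPrime n := hle
        _ = ⌊((nthPrime n : ℕ) : ℝ)⌋₊ := (Nat.floor_natCast _).symm
        _ ≤ ⌊y⌋₊ := Nat.floor_le_floor h1
  rw [hset]

set_option maxHeartbeats 1000000 in
theorem primeGap_FKS
    (hθ : ∀ x : ℝ, 2 ≤ x → |chebyshevθ x - x| <
      9.220226 * x * Real.log x ^ ((3 : ℝ) / 2) *
        Real.exp (-0.8476836 * Real.sqrt (Real.log x))) :
    ∀ n : ℕ, 1 ≤ n →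
      primeGap n / (nthPrime n : ℝ) <
        3 * 9.220226 * Real.log (nthPrime n) ^ ((3 : ℝ) / 2) *
          Real.exp (-0.8476836 * Real.sqrt (Real.log (nthPrime n))) := by
  intro n hn
  unfold primeGap
  have hpp : Nat.Prime (nthPrime n) := Nat.prime_nth_prime _
  have hqp : Nat.Prime (nthPrime (n+1)) := Nat.prime_nth_prime _
  have hp2 : 2 ≤ nthPrime n := hpp.two_le
  have hpq : nthPrime n < nthPrime (n+1) := by
    unfold nthPrime
    rw [show n + 1 - 1 = n from rfl]
    exact (Nat.nth_lt_nth Nat.infinite_setOf_prime).mpr (by omega)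
  set P : ℝ := (nthPrime n : ℝ) with hPdef
  set Q : ℝ := (nthPrime (n+1) : ℝ) with hQdef
  have hP2 : (2:ℝ) ≤ P := by rw [hPdef]; exact_mod_cast hp2
  have hPpos : (0:ℝ) < P := by linarith
  have hPQ : P < Q := by rw [hPdef, hQdef]; exact_mod_cast hpq
  have hθP : chebyshevθ P - P < 9.220226 * P * Real.log P ^ ((3:ℝ)/2) *
      Real.exp (-0.8476836 * Real.sqrt (Real.log P)) := (abs_lt.mp (hθ P hP2)).2
  have hθconst : ∀ y : ℝ, P ≤ y → y < Q → chebyshevθ y = chebyshevθ P := by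
    intro y hy1 hy2
    rw [hPdef] at hy1 ⊢
    rw [hQdef] at hy2
    exact theta_const_s14 hy1 hy2
  have hbert : Q < 2 * P := by
    obtain ⟨r, hr, hpr, hr2p⟩ := Nat.exists_prime_lt_and_le_two_mul (nthPrime n) (by omega)
    have hqr : nthPrime (n+1) ≤ r := nthPrime_succ_le_s14 hr hpr
    have hq2p : nthPrime (n+1) < 2 * nthPrime n := by
      rcases Nat.lt_or_ge (nthPrime (n+1)) (2 * nthPrime n) with h | h
      · exact h
      · exfalso
        have heq : nthPrime (n+1) = 2 * nthPrime n := le_antisymm (hqr.trans hr2p) h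
        have hdvd : (2:ℕ) ∣ nthPrime (n+1) := ⟨nthPrime n, heq⟩
        have h2 := Nat.Prime.eq_one_or_self_of_dvd hqp 2 hdvd
        omega
    rw [hPdef, hQdef]
    exact_mod_cast hq2p
  clear_value P Q
  clear hPdef hQdef hpq hp2 hpp hqp hn
  set L : ℝ := Real.log P with hLdef
  have hL2 : Real.log 2 ≤ L := by rw [hLdef]; exact Real.log_le_log (by norm_num) hP2
  have hlog2 : (0.6931471803:ℝ) < Real.log 2 := Real.log_two_gt_d9
  have hLpos : (0:ℝ) < L := by linarith
  set E : ℝ := Real.exp (-0.8476836 * Real.sqrt L) with hEdef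
  have hEpos : (0:ℝ) < E := by rw [hEdef]; exact Real.exp_pos _
  have hL32pos : (0:ℝ) < L ^ ((3:ℝ)/2) := Real.rpow_pos_of_pos hLpos _
  rw [show 3 * 9.220226 * L ^ ((3:ℝ)/2) * E = 3 * (9.220226 * L ^ ((3:ℝ)/2) * E) by ring]
  have hθPε : chebyshevθ P - P < P * (9.220226 * L ^ ((3:ℝ)/2) * E) := by
    calc chebyshevθ P - P < 9.220226 * P * L ^ ((3:ℝ)/2) * E := hθP
      _ = P * (9.220226 * L ^ ((3:ℝ)/2) * E) := by ring
  clear hθP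
  set ε : ℝ := 9.220226 * L ^ ((3:ℝ)/2) * E with hεdef
  have hεpos : (0:ℝ) < ε := by rw [hεdef]; positivity
  clear_value ε E L
  rw [div_lt_iff₀ hPpos]
  -- goal : Q - P < 3 * ε * P
  rcases lt_or_ge ε (1/3) with hcase | hcase
  · -- analytic case
    have hL13 : (13:ℝ) ≤ L := by
      by_contra hconL
      push_neg at hconL
      have hkey : (1:ℝ)/3 ≤ ε := by
        rcases le_or_gt L 1 with h1 | h1
        · have hA1 : L ^ (2:ℝ) ≤ L ^ ((3:ℝ)/2) :=
            Real.rpow_le_rpow_of_exponent_ge hLpos h1 (by norm_num)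
          have hA2 : (0.6931471803:ℝ) ^ (2:ℝ) ≤ L ^ (2:ℝ) :=
            Real.rpow_le_rpow (by norm_num) (by linarith) (by norm_num)
          have hA3 : (0.6931471803:ℝ) ^ (2:ℝ) = 0.6931471803 ^ (2:ℕ) := by
            rw [← Real.rpow_natCast]; norm_num
          have hA4 : (0.48:ℝ) ≤ L ^ ((3:ℝ)/2) := by
            rw [hA3] at hA2
            nlinarith
          have hsL : Real.sqrt L ≤ 1 := by
            rw [show (1:ℝ) = Real.sqrt 1 by rw [Real.sqrt_one]]
            exact Real.sqrt_le_sqrt h1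
          have hsL0 : 0 ≤ Real.sqrt L := Real.sqrt_nonneg _
          have hE1 : Real.exp (-0.8476836) ≤ E := by
            rw [hEdef]
            apply Real.exp_le_exp.mpr
            nlinarith
          have hE2 : (0.1523164:ℝ) ≤ Real.exp (-0.8476836) := by
            have := Real.add_one_le_exp (-0.8476836 : ℝ)
            linarith
          have hE3 : (0.1523164:ℝ) ≤ E := hE2.trans hE1
          rw [hεdef]
          nlinarith [mul_nonneg (sub_nonneg.2 hA4) (sub_nonneg.2 hE3)]
        · have hA1 : (1:ℝ) ≤ L ^ ((3:ℝ)/2) := by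
            have := Real.rpow_le_rpow_of_exponent_le h1.le (show (0:ℝ) ≤ 3/2 by norm_num)
            rwa [Real.rpow_zero] at this
          have hsL : Real.sqrt L ≤ 3.606 := by
            rw [show (3.606:ℝ) = Real.sqrt (3.606^2) by rw [Real.sqrt_sq]; norm_num]
            exact Real.sqrt_le_sqrt (by nlinarith)
          have hsL0 : 0 ≤ Real.sqrt L := Real.sqrt_nonneg _
          have hE1 : Real.exp (-3.1) ≤ E := by
            rw [hEdef]
            apply Real.exp_le_exp.mpr
            nlinarith
          have he31 : Real.exp 3.1 ≤ 22.34 := by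
            have heq : Real.exp (3.1:ℝ) = Real.exp 1 ^ (3:ℕ) * Real.exp 0.1 := by
              rw [← Real.exp_nat_mul, ← Real.exp_add]; norm_num
            have e1 : Real.exp 1 < 2.7182818286 := Real.exp_one_lt_d9
            have e1c : Real.exp 1 ^ (3:ℕ) ≤ 20.086 := by
              calc Real.exp 1 ^ (3:ℕ) ≤ 2.7182818286 ^ (3:ℕ) :=
                    pow_le_pow_left₀ (Real.exp_pos 1).le e1.le 3
                _ ≤ 20.086 := by norm_num
            have e01 : Real.exp (0.1:ℝ) ≤ 1.112 := by
              have h := Real.add_one_lt_exp (show (-0.1:ℝ) ≠ 0 by norm_num)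
              rw [Real.exp_neg] at h
              have hp := Real.exp_pos (0.1:ℝ)
              have hi : Real.exp 0.1 * (Real.exp 0.1)⁻¹ = 1 := mul_inv_cancel₀ hp.ne'
              nlinarith
            rw [heq]
            calc Real.exp 1 ^ (3:ℕ) * Real.exp 0.1 ≤ 20.086 * 1.112 :=
                  mul_le_mul e1c e01 (Real.exp_pos _).le (by norm_num)
              _ ≤ 22.34 := by norm_num
          have hE2 : (1:ℝ)/22.34 ≤ Real.exp (-3.1) := by
            rw [Real.exp_neg, ← one_div]
            exact one_div_le_one_div_of_le (Real.exp_pos _) he31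
          have hE3 : (1:ℝ)/22.34 ≤ E := hE2.trans hE1
          rw [hεdef]
          nlinarith [mul_nonneg (sub_nonneg.2 hA1) (sub_nonneg.2 hE3)]
      linarith
    by_contra hcon
    push_neg at hcon
    -- hcon : 3 * ε * P ≤ Q - P
    have hPε : (0:ℝ) < P * ε := mul_pos hPpos hεpos
    have h3ε : (0:ℝ) < 1 - 3*ε := by linarith
    set δ : ℝ := P * ε * (1 - 3*ε) / 2 with hδdef
    have hδpos : (0:ℝ) < δ := by rw [hδdef]; positivity
    have hδlt : δ < P * ε := by
      rw [hδdef]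
      nlinarith [mul_pos hPε hεpos]
    clear_value δ
    set y : ℝ := Q - δ with hydef
    have hyP : P < y := by rw [hydef]; linarith
    have hy2 : (2:ℝ) ≤ y := by linarith
    have hyQ : y < Q := by rw [hydef]; linarith
    have hypos : (0:ℝ) < y := by linarith
    clear_value y
    have hθy : chebyshevθ y = chebyshevθ P := hθconst y hyP.le hyQ
    have h1 := (abs_lt.mp (hθ y hy2)).1
    rw [hθy] at h1
    have hLy : L ≤ Real.log y := by rw [hLdef]; exact Real.log_le_log hPpos hyP.le
    have hmono := FKS_eps_anti L (Real.log y) hL13 hLy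
    rw [← hEdef] at hmono
    have hy_ub : y - chebyshevθ P < y * ε := by
      have hb : 9.220226 * y * Real.log y ^ ((3:ℝ)/2) *
          Real.exp (-0.8476836 * Real.sqrt (Real.log y)) ≤ y * ε := by
        rw [hεdef]
        calc 9.220226 * y * Real.log y ^ ((3:ℝ)/2) *
            Real.exp (-0.8476836 * Real.sqrt (Real.log y))
            = (9.220226 * y) * (Real.log y ^ ((3:ℝ)/2) *
              Real.exp (-0.8476836 * Real.sqrt (Real.log y))) := by ring
          _ ≤ (9.220226 * y) * (L ^ ((3:ℝ)/2) * E) :=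
              mul_le_mul_of_nonneg_left hmono (by positivity)
          _ = y * (9.220226 * L ^ ((3:ℝ)/2) * E) := by ring
      linarith
    nlinarith [mul_nonneg (sub_nonneg.2 hcon) (by linarith : (0:ℝ) ≤ 1 - ε),
      mul_nonneg hδpos.le hεpos.le, mul_pos hPε h3ε]
  · -- Bertrand case
    linarith [mul_le_mul_of_nonneg_right hcase hPpos.le]
end

section
/- Let θ(x) = ∑_{p prime, p ≤ x} log p, p_n the n-th prime, and g_n = p_{n+1} − p_n. Suppose that |θ(x) − x| < 23.14 · x (log x)^{1.503} exp(−0.8659 √(log x)) for all x ≥ exp(10^5). Then for every n with p_n ≥ exp(10^5) one has g_n / p_n < 3 · 23.14 (log p_n)^{1.503} exp(−0.8659 √(log p_n)). -/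
/-- The exponent function `g(u) = 1.503 log u - 0.8659 √u` is antitone on `[10^5, ∞)`. -/
lemma gap_aux_anti : AntitoneOn (fun u : ℝ => 1.503 * Real.log u - 0.8659 * Real.sqrt u)
    (Set.Ici (10 ^ 5 : ℝ)) := by
  have hd : ∀ x : ℝ, x ∈ interior (Set.Ici (10 ^ 5 : ℝ)) →
      HasDerivAt (fun u : ℝ => 1.503 * Real.log u - 0.8659 * Real.sqrt u)
        (1.503 * x⁻¹ - 0.8659 * (1 / (2 * Real.sqrt x))) x := by
    intro x hx
    rw [interior_Ici, Set.mem_Ioi] at hx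
    have hx0 : x ≠ 0 := by intro h; rw [h] at hx; norm_num at hx
    exact ((Real.hasDerivAt_log hx0).const_mul 1.503).sub
      ((Real.hasDerivAt_sqrt hx0).const_mul 0.8659)
  apply antitoneOn_of_deriv_nonpos (convex_Ici _)
  · apply ContinuousOn.sub
    · exact continuousOn_const.mul (Real.continuousOn_log.mono (by
        intro x hx
        simp only [Set.mem_Ici] at hx
        simp only [Set.mem_compl_iff, Set.mem_singleton_iff]
        intro h; rw [h] at hx; norm_num at hx))
    · exact continuousOn_const.mul Real.continuous_sqrt.continuousOn
  · intro x hx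
    exact (hd x hx).differentiableAt.differentiableWithinAt
  · intro x hx
    rw [(hd x hx).deriv]
    rw [interior_Ici, Set.mem_Ioi] at hx
    have hxpos : (0:ℝ) < x := by nlinarith
    have hs316 : (316:ℝ) ≤ Real.sqrt x := by
      rw [Real.le_sqrt' (by norm_num)]
      nlinarith
    have hs0 : (0:ℝ) < Real.sqrt x := by linarith
    have hss : Real.sqrt x * Real.sqrt x = x := Real.mul_self_sqrt hxpos.le
    have key : 1.503 * x⁻¹ ≤ 0.8659 * (1 / (2 * Real.sqrt x)) := by
      rw [inv_eq_one_div, mul_one_div, mul_one_div,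
        div_le_div_iff₀ hxpos (by positivity)]
      nlinarith
    linarith

/-- Bound on the exponent: `g(u) ≤ -255` for `u ≥ 10^5`. -/
lemma gap_aux_le : ∀ u : ℝ, (10 ^ 5 : ℝ) ≤ u →
    1.503 * Real.log u - 0.8659 * Real.sqrt u ≤ -255 := by
  have hlog : Real.log ((10:ℝ) ^ 5) ≤ 12 := by
    rw [Real.log_le_iff_le_exp (by norm_num)]
    have h12 : Real.exp 12 = Real.exp 1 ^ (12 : ℕ) := by
      rw [← Real.exp_nat_mul]; norm_num
    have hpow : (2.7182818283 : ℝ) ^ (12 : ℕ) ≤ Real.exp 1 ^ (12 : ℕ) :=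
      pow_le_pow_left₀ (by norm_num) Real.exp_one_gt_d9.le 12
    rw [h12]
    nlinarith [hpow]
  have hsqrt : (316 : ℝ) ≤ Real.sqrt ((10:ℝ) ^ 5) := by
    rw [Real.le_sqrt' (by norm_num)]; norm_num
  intro u hu
  have h := gap_aux_anti (Set.self_mem_Ici) (Set.mem_Ici.2 hu) hu
  simp only at h
  norm_num at hlog hsqrt h ⊢
  linarith

theorem primeGap_JY_restricted
    (hθ : ∀ x : ℝ, Real.exp (10 ^ 5) ≤ x → |chebyshevθ x - x| <
      23.14 * x * Real.log x ^ (1.503 : ℝ) *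
        Real.exp (-0.8659 * Real.sqrt (Real.log x))) :
    ∀ n : ℕ, 1 ≤ n → Real.exp (10 ^ 5) ≤ (nthPrime n : ℝ) →
      primeGap n / (nthPrime n : ℝ) <
        3 * 23.14 * Real.log (nthPrime n) ^ (1.503 : ℝ) *
          Real.exp (-0.8659 * Real.sqrt (Real.log (nthPrime n))) := by
  intro n hn hp
  by_contra hcon
  push_neg at hcon
  have hinf : (setOf Nat.Prime).Infinite := Nat.infinite_setOf_prime
  have hQnth : nthPrime (n + 1) = Nat.nth Nat.Prime n := by
    unfold nthPrime; congr 1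
  have hPnth : nthPrime n = Nat.nth Nat.Prime (n - 1) := rfl
  obtain ⟨p, hpdef⟩ : ∃ p : ℝ, p = ((nthPrime n : ℕ) : ℝ) := ⟨_, rfl⟩
  obtain ⟨q, hqdef⟩ : ∃ q : ℝ, q = ((nthPrime (n + 1) : ℕ) : ℝ) := ⟨_, rfl⟩
  rw [← hpdef] at hp hcon
  have hgap : primeGap n = q - p := by rw [hpdef, hqdef]; rfl
  rw [hgap] at hcon
  have hppos : (0:ℝ) < p := lt_of_lt_of_le (Real.exp_pos _) hp
  have hlogp : (10 ^ 5 : ℝ) ≤ Real.log p := (Real.le_log_iff_exp_le hppos).2 hp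
  have hlogppos : (0:ℝ) < Real.log p := by nlinarith
  obtain ⟨E, hEdef⟩ : ∃ E : ℝ, E = 23.14 * Real.log p ^ (1.503 : ℝ) *
      Real.exp (-0.8659 * Real.sqrt (Real.log p)) := ⟨_, rfl⟩
  have hEexp : E = 23.14 * Real.exp (1.503 * Real.log (Real.log p)
      - 0.8659 * Real.sqrt (Real.log p)) := by
    rw [hEdef, Real.rpow_def_of_pos hlogppos, mul_assoc, ← Real.exp_add]
    ring_nf
  have hEpos : 0 < E := by rw [hEexp]; positivity
  have hexp255 : Real.exp (-255 : ℝ) ≤ 1 / 256 := by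
    have h255 : (256:ℝ) ≤ Real.exp 255 := by
      have := Real.add_one_le_exp (255:ℝ); linarith
    rw [Real.exp_neg, inv_le_comm₀ (Real.exp_pos _) (by norm_num)]
    linarith
  have hE02 : E ≤ 0.2 := by
    rw [hEexp]
    have h1 : Real.exp (1.503 * Real.log (Real.log p) - 0.8659 * Real.sqrt (Real.log p))
        ≤ Real.exp (-255) := Real.exp_le_exp.2 (gap_aux_le (Real.log p) hlogp)
    nlinarith [Real.exp_pos (-255 : ℝ)]
  have hcon' : 3 * E ≤ (q - p) / p := by
    calc 3 * E = 3 * 23.14 * Real.log p ^ (1.503 : ℝ) *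
        Real.exp (-0.8659 * Real.sqrt (Real.log p)) := by rw [hEdef]; ring
    _ ≤ (q - p) / p := hcon
  have hq3 : p + 3 * E * p ≤ q := by
    have := (le_div_iff₀ hppos).1 hcon'
    linarith
  obtain ⟨y, hydef⟩ : ∃ y : ℝ, y = p * (1 + 2.5 * E) := ⟨_, rfl⟩
  have hEp : 0 < E * p := mul_pos hEpos hppos
  have hyp : p ≤ y := by rw [hydef]; nlinarith
  have hyq : y < q := by rw [hydef]; nlinarith
  have hyx : Real.exp (10 ^ 5) ≤ y := le_trans hp hyp
  have hypos : 0 < y := lt_of_lt_of_le hppos hyp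
  -- θ y = θ p
  have hθeq : chebyshevθ y = chebyshevθ p := by
    rw [hpdef]
    unfold chebyshevθ
    rw [Nat.floor_natCast]
    symm
    apply Finset.sum_subset
    · apply Finset.filter_subset_filter
      apply Finset.range_subset_range.2
      have : nthPrime n ≤ ⌊y⌋₊ := Nat.le_floor (by rw [← hpdef]; exact hyp)
      omega
    · intro m hm hnm
      exfalso
      simp only [Finset.mem_filter, Finset.mem_range] at hm hnm
      obtain ⟨hmr, hmp⟩ := hm
      have hmgtP : nthPrime n < m := by
        by_contra h
        push_neg at h
        exact hnm ⟨by omega, hmp⟩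
      have hmltQ : m < nthPrime (n + 1) := by
        have h1 : (m:ℝ) ≤ (⌊y⌋₊ : ℝ) := by exact_mod_cast Nat.lt_succ_iff.1 hmr
        have h2 : ((⌊y⌋₊ : ℕ):ℝ) ≤ y := Nat.floor_le hypos.le
        have h3 : (m:ℝ) < q := lt_of_le_of_lt (h1.trans h2) hyq
        rw [hqdef] at h3
        exact_mod_cast h3
      have hcm : Nat.nth Nat.Prime (Nat.count Nat.Prime m) = m := Nat.nth_count hmp
      have h3 : n - 1 < Nat.count Nat.Prime m := by
        apply (Nat.nth_lt_nth hinf).1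
        rw [hcm, ← hPnth]
        exact hmgtP
      have h4 : Nat.count Nat.Prime m < n := by
        apply (Nat.nth_lt_nth hinf).1
        rw [hcm, ← hQnth]
        exact hmltQ
      omega
  -- apply the θ bounds at p and y
  have h1' : |chebyshevθ p - p| < p * E := by
    have h1 := hθ p hp
    calc |chebyshevθ p - p| < 23.14 * p * Real.log p ^ (1.503 : ℝ) *
        Real.exp (-0.8659 * Real.sqrt (Real.log p)) := h1
    _ = p * E := by rw [hEdef]; ring
  have hlogy : Real.log p ≤ Real.log y := Real.log_le_log hppos hyp
  have hlogy5 : (10 ^ 5 : ℝ) ≤ Real.log y := le_trans hlogp hlogy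
  have hlogypos : (0:ℝ) < Real.log y := by nlinarith
  have hanti := gap_aux_anti (Set.mem_Ici.2 hlogp) (Set.mem_Ici.2 hlogy5) hlogy
  simp only at hanti
  have hEy : 23.14 * Real.log y ^ (1.503 : ℝ) *
      Real.exp (-0.8659 * Real.sqrt (Real.log y)) ≤ E := by
    rw [hEexp, Real.rpow_def_of_pos hlogypos, mul_assoc, ← Real.exp_add]
    have hle : Real.exp (Real.log (Real.log y) * 1.503 + -0.8659 * Real.sqrt (Real.log y))
        ≤ Real.exp (1.503 * Real.log (Real.log p) - 0.8659 * Real.sqrt (Real.log p)) := by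
      apply Real.exp_le_exp.2
      linarith
    exact mul_le_mul_of_nonneg_left hle (by norm_num)
  have h2' : |chebyshevθ y - y| < y * E := by
    have h2 := hθ y hyx
    calc |chebyshevθ y - y| < 23.14 * y * Real.log y ^ (1.503 : ℝ) *
        Real.exp (-0.8659 * Real.sqrt (Real.log y)) := h2
    _ = y * (23.14 * Real.log y ^ (1.503 : ℝ) *
        Real.exp (-0.8659 * Real.sqrt (Real.log y))) := by ring
    _ ≤ y * E := mul_le_mul_of_nonneg_left hEy hypos.le
  obtain ⟨h1a, h1b⟩ := abs_lt.1 h1'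
  obtain ⟨h2a, h2b⟩ := abs_lt.1 h2'
  rw [hθeq] at h2a
  rw [hydef] at h2a hyq
  have hint : 0 ≤ E * p * (0.2 - E) :=
    mul_nonneg (mul_nonneg hEpos.le hppos.le) (sub_nonneg.2 hE02)
  linarith [hint, h1b, h2a]
end

section
/- Let θ(x) = ∑_{p prime, p ≤ x} log p, p_n the n-th prime, and g_n = p_{n+1} − p_n. Suppose that |θ(x) − x| < 1642333 · x exp(−√(log x)) for all x ≥ exp(10^6). Then for every n with p_n ≥ exp(10^6) one has g_n / p_n < 4926999 exp(−√(log p_n)). -/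
theorem primeGap_asymptotic
    (hθ : ∀ x : ℝ, Real.exp (10 ^ 6) ≤ x → |chebyshevθ x - x| <
      1642333 * x * Real.exp (-Real.sqrt (Real.log x))) :
    ∀ n : ℕ, 1 ≤ n → Real.exp (10 ^ 6) ≤ (nthPrime n : ℝ) →
      primeGap n / (nthPrime n : ℝ) <
        4926999 * Real.exp (-Real.sqrt (Real.log (nthPrime n))) := by
  intro n hn hpn
  have hinf := Nat.infinite_setOf_prime
  set p := nthPrime n with hp_def
  set q := nthPrime (n + 1) with hq_def
  have hpq' : q = Nat.nth Nat.Prime n := by simp [hq_def, nthPrime]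
  have hp' : p = Nat.nth Nat.Prime (n - 1) := rfl
  have hp_prime : p.Prime := Nat.prime_nth_prime _
  have hq_prime : q.Prime := by rw [hpq']; exact Nat.prime_nth_prime _
  have hlt : p < q := by
    rw [hp', hpq']; exact (Nat.nth_lt_nth hinf).2 (by omega)
  -- any prime below q is ≤ p
  have hgap : ∀ m : ℕ, m.Prime → m < q → m ≤ p := by
    intro m hm hmq
    have h1 : Nat.nth Nat.Prime (Nat.count Nat.Prime m) = m := Nat.nth_count hm
    have h2 : Nat.count Nat.Prime m < n := by
      rw [← Nat.nth_lt_nth hinf, h1, ← hpq']; exact hmq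
    have : Nat.count Nat.Prime m ≤ n - 1 := by omega
    calc m = Nat.nth Nat.Prime (Nat.count Nat.Prime m) := h1.symm
    _ ≤ Nat.nth Nat.Prime (n - 1) := (Nat.nth_le_nth hinf).2 this
  -- Bertrand: q ≤ 2 p
  have hq2p : q ≤ 2 * p := by
    obtain ⟨r, hr_prime, hpr, hr2p⟩ := Nat.exists_prime_lt_and_le_two_mul p hp_prime.pos.ne'
    have h1 : Nat.nth Nat.Prime (Nat.count Nat.Prime r) = r := Nat.nth_count hr_prime
    have h2 : n - 1 < Nat.count Nat.Prime r := by
      rw [← Nat.nth_lt_nth hinf, h1, ← hp']; exact hpr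
    have : q ≤ r := by
      rw [hpq', ← h1]; exact (Nat.nth_le_nth hinf).2 (by omega)
    omega
  -- θ constant on [p, q)
  have hθeq : ∀ x : ℝ, (p : ℝ) ≤ x → x < (q : ℝ) → chebyshevθ x = chebyshevθ p := by
    intro x hx1 hx2
    unfold chebyshevθ
    congr 1
    ext m
    simp only [Finset.mem_filter, Finset.mem_range, Nat.lt_succ_iff, Nat.floor_natCast]
    constructor
    · rintro ⟨hm1, hm2⟩
      refine ⟨hgap m hm2 ?_, hm2⟩
      have hfx : (⌊x⌋₊ : ℝ) ≤ x := Nat.floor_le (le_trans (Nat.cast_nonneg p) hx1)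
      have : (m : ℝ) < (q : ℝ) := lt_of_le_of_lt (le_trans (Nat.cast_le.2 hm1) hfx) hx2
      exact_mod_cast this
    · rintro ⟨hm1, hm2⟩
      exact ⟨le_trans hm1 (Nat.le_floor hx1), hm2⟩
  set E : ℝ := Real.exp (-Real.sqrt (Real.log p)) with hE_def
  have hppos : (0 : ℝ) < p := by exact_mod_cast hp_prime.pos
  have hEpos : 0 < E := Real.exp_pos _
  have hθp := hθ p hpn
  -- 4926999 * E ≤ 1
  have hEsmall : 4926999 * E ≤ 1 := by
    have hlogp : (10 : ℝ) ^ 6 ≤ Real.log p := by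
      rw [← Real.log_exp ((10 : ℝ) ^ 6)]
      exact Real.log_le_log (Real.exp_pos _) hpn
    have hsq : (1000 : ℝ) ≤ Real.sqrt (Real.log p) := by
      rw [show (1000 : ℝ) = Real.sqrt (1000 ^ 2) by
        rw [Real.sqrt_sq]; norm_num]
      exact Real.sqrt_le_sqrt (by norm_num at hlogp ⊢; linarith)
    have hE1 : E ≤ Real.exp (-1000) := Real.exp_le_exp.2 (by linarith)
    have h1000 : (4926999 : ℝ) ≤ Real.exp 1000 := by
      have h250 : (251 : ℝ) ≤ Real.exp 250 := by
        have := Real.add_one_le_exp (250 : ℝ); linarith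
      have : (251 : ℝ) ^ 4 ≤ (Real.exp 250) ^ 4 := by
        apply pow_le_pow_left₀ (by norm_num) h250
      rw [← Real.exp_nat_mul] at this
      norm_num at this ⊢
      linarith
    calc 4926999 * E ≤ 4926999 * Real.exp (-1000) := by nlinarith
    _ ≤ Real.exp 1000 * Real.exp (-1000) := by nlinarith [Real.exp_pos (-1000 : ℝ)]
    _ = 1 := by rw [← Real.exp_add]; norm_num
  have hA : |chebyshevθ p - p| < 1642333 * p * E := by
    simpa [hE_def, Nat.floor_natCast] using hθp
  have habs1 : chebyshevθ p - p < 1642333 * p * E := (abs_lt.1 hA).2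
  have habs2 : -(1642333 * p * E) < chebyshevθ p - p := (abs_lt.1 hA).1
  -- key: q ≤ θ p + 2 * (1642333 p E)
  have hkey : (q : ℝ) ≤ chebyshevθ p + 2 * (1642333 * p * E) := by
    by_contra hcon
    push_neg at hcon
    set x : ℝ := max (p : ℝ) (chebyshevθ p + 2 * (1642333 * p * E)) with hx_def
    have hpx : (p : ℝ) ≤ x := le_max_left _ _
    have hxq : x < q := max_lt (by exact_mod_cast hlt) hcon
    have hx2p : x ≤ 2 * p := by
      apply max_le
      · linarith
      · nlinarith
    have hxE : Real.exp (-Real.sqrt (Real.log x)) ≤ E := by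
      apply Real.exp_le_exp.2
      apply neg_le_neg
      apply Real.sqrt_le_sqrt
      exact Real.log_le_log hppos hpx
    have hθx : chebyshevθ x = chebyshevθ p := hθeq x hpx (by exact_mod_cast hxq)
    have hb := hθ x (le_trans hpn hpx)
    rw [hθx] at hb
    have hb2 : x - chebyshevθ p < 1642333 * x * Real.exp (-Real.sqrt (Real.log x)) :=
      lt_of_le_of_lt (le_abs_self _) (by rw [abs_sub_comm]; exact hb)
    have hb3 : 1642333 * x * Real.exp (-Real.sqrt (Real.log x)) ≤ 2 * (1642333 * p * E) := by
      have hxpos : 0 < x := lt_of_lt_of_le hppos hpx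
      have := mul_le_mul hx2p hxE (le_of_lt (Real.exp_pos _)) (by positivity)
      nlinarith
    have : x < chebyshevθ p + 2 * (1642333 * p * E) := by linarith
    exact absurd (le_max_right (p : ℝ) _) (not_le.2 this)
  have hgp : primeGap n = (q : ℝ) - p := rfl
  rw [hgp, div_lt_iff₀ hppos]
  have : (q : ℝ) - p < 4926999 * p * E := by nlinarith
  calc (q : ℝ) - p < 4926999 * p * E := this
  _ = 4926999 * E * p := by ring
end
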